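/- arXiv:1610.03766 — 9 statements merged into one kernel-verified Lean document; each statement's English description precedes it below -/
import Mathlib

section
/- Let G be a graph with independent sets I and J of equal size. If I \ J can be k-TAR reconfigured to J \ I in the induced subgraph G[I Δ J], then I can be k-TAR reconfigured to J in G. -/
/-!
Pad every set of the reconfiguration sequence in `G[I Δ J]` by the common part `I ∩ J`. The padded
sets are still independent, since a vertex of `I ∩ J` and a vertex of `I Δ J` lie together in `I`
or together in `J`; they differ from one step to the next exactly as before; and the padding, being
disjoint from `I Δ J`, adds the same amount `|I ∩ J|` to every size, so the budget `k` is kept.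
-/

/-- `S` is an independent set in `G`. -/
def IsIndepSet {V : Type*} (G : SimpleGraph V) (S : Finset V) : Prop :=
  ∀ u ∈ S, ∀ v ∈ S, ¬ G.Adj u v

/-- `A` can be `k`-TAR reconfigured to `B` inside the induced subgraph `G[U]`:
a sequence of independent sets contained in `U`, starting at `A` and ending at `B`,
where consecutive sets differ by adding or removing a single vertex and every
intermediate set has size at least `|A| - k`. -/
def TARReconfIn {V : Type*} [DecidableEq V] (G : SimpleGraph V) (U : Finset V) (k : ℕ)
    (A B : Finset V) : Prop :=
  ∃ (n : ℕ) (W : ℕ → Finset V), W 0 = A ∧ W n = B ∧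
    (∀ i ≤ n, W i ⊆ U ∧ IsIndepSet G (W i) ∧ A.card ≤ (W i).card + k) ∧
    (∀ i < n, (symmDiff (W i) (W (i + 1))).card ≤ 1)

section

variable {V : Type*} {G : SimpleGraph V}

theorem IsIndepSet.mono {S T : Finset V} (hT : IsIndepSet G T) (hST : S ⊆ T) :
    IsIndepSet G S :=
  fun u hu v hv => hT u (hST hu) v (hST hv)

theorem IsIndepSet.union [DecidableEq V] {S T : Finset V} (hS : IsIndepSet G S)
    (hT : IsIndepSet G T) (hST : ∀ u ∈ S, ∀ v ∈ T, ¬ G.Adj u v) : IsIndepSet G (S ∪ T) := by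
  intro u hu v hv
  rw [Finset.mem_union] at hu hv
  rcases hu with hu | hu <;> rcases hv with hv | hv
  · exact hS u hu v hv
  · exact hST u hu v hv
  · exact fun huv => hST v hv u hu huv.symm
  · exact hT u hu v hv

theorem Finset.symmDiff_union_union_left_subset [DecidableEq V] (C X Y : Finset V) :
    symmDiff (C ∪ X) (C ∪ Y) ⊆ symmDiff X Y := by
  intro v
  simp only [Finset.mem_symmDiff, Finset.mem_union]
  tauto

variable [DecidableEq V] {U : Finset V} {k : ℕ} {A B : Finset V}

theorem TARReconfIn.mono {U' : Finset V} (hU : U ⊆ U') (h : TARReconfIn G U k A B) :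
    TARReconfIn G U' k A B := by
  obtain ⟨n, W, h0, hn, hW, hstep⟩ := h
  exact ⟨n, W, h0, hn, fun i hi => ⟨(hW i hi).1.trans hU, (hW i hi).2⟩, hstep⟩

theorem TARReconfIn.union_left {C : Finset V} (h : TARReconfIn G U k A B)
    (hC : IsIndepSet G C) (hCU : Disjoint C U) (hCU_adj : ∀ u ∈ C, ∀ v ∈ U, ¬ G.Adj u v) :
    TARReconfIn G (C ∪ U) k (C ∪ A) (C ∪ B) := by
  obtain ⟨n, W, h0, hn, hW, hstep⟩ := h
  have hAU : A ⊆ U := h0 ▸ (hW 0 n.zero_le).1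
  refine ⟨n, fun i => C ∪ W i, by simp only [h0], by simp only [hn], fun i hi => ?_, fun i hi => ?_⟩
  · obtain ⟨hWU, hWindep, hWcard⟩ := hW i hi
    refine ⟨Finset.union_subset_union subset_rfl hWU,
      hC.union hWindep fun u hu v hv => hCU_adj u hu v (hWU hv), ?_⟩
    rw [Finset.card_union_of_disjoint (hCU.mono_right hAU),
      Finset.card_union_of_disjoint (hCU.mono_right hWU)]
    omega
  · exact (Finset.card_le_card (Finset.symmDiff_union_union_left_subset C _ _)).trans
      (hstep i hi)

end

theorem tar_reconf_of_symmDiff_general {V : Type*} [Fintype V] [DecidableEq V] (G : SimpleGraph V)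
    (I J : Finset V) (hI : IsIndepSet G I) (hJ : IsIndepSet G J)
    (k : ℕ) (h : TARReconfIn G (symmDiff I J) k (I \ J) (J \ I)) :
    TARReconfIn G Finset.univ k I J := by
  have hcross : ∀ u ∈ I ∩ J, ∀ v ∈ symmDiff I J, ¬ G.Adj u v := by
    intro u hu v hv
    rw [Finset.mem_inter] at hu
    rcases Finset.mem_symmDiff.1 hv with ⟨hvI, -⟩ | ⟨hvJ, -⟩
    · exact hI u hu.1 v hvI
    · exact hJ u hu.2 v hvJ
  have hpadded :=
    h.union_left (hI.mono Finset.inter_subset_left) (disjoint_symmDiff_inf I J).symm hcross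
  have hI_eq : I ∩ J ∪ I \ J = I := by rw [Finset.union_comm, Finset.sdiff_union_inter]
  have hJ_eq : I ∩ J ∪ J \ I = J := by
    rw [Finset.inter_comm, Finset.union_comm, Finset.sdiff_union_inter]
  rw [hI_eq, hJ_eq] at hpadded
  exact hpadded.mono (Finset.subset_univ _)

/-- if `I \ J` can be `k`-TAR reconfigured to `J \ I` in `G[I Δ J]`, then
`I` can be `k`-TAR reconfigured to `J` in `G`. -/
theorem tar_reconf_of_symmDiff {V : Type*} [Fintype V] [DecidableEq V] (G : SimpleGraph V)
    (I J : Finset V) (hI : IsIndepSet G I) (hJ : IsIndepSet G J) (hcard : I.card = J.card)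
    (k : ℕ) (h : TARReconfIn G (symmDiff I J) k (I \ J) (J \ I)) :
    TARReconfIn G Finset.univ k I J :=
  tar_reconf_of_symmDiff_general G I J hI hJ k h
end

section
/- For any graph G with at least one vertex, any two independent sets of equal size in G can be MTJ reconfigured into each other using jumps of size at most max(vc(G), 1), where vc(G) is the minimum size of a vertex cover of G. -/
/-- `C` is a vertex cover of `G`. -/
def IsVertexCover {V : Type*} (G : SimpleGraph V) (C : Finset V) : Prop :=
  ∀ u v, G.Adj u v → u ∈ C ∨ v ∈ C

/-- The minimum size of a vertex cover of `G`. -/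
noncomputable def vcNum (V : Type*) [Fintype V] (G : SimpleGraph V) : ℕ :=
  sInf {n | ∃ C : Finset V, IsVertexCover G C ∧ C.card = n}

/-- `A` can be `k`-MTJ reconfigured to `B` in `G`. -/
def MTJReconf {V : Type*} [DecidableEq V] (G : SimpleGraph V) (k : ℕ)
    (A B : Finset V) : Prop :=
  ∃ (n : ℕ) (W : ℕ → Finset V), W 0 = A ∧ W n = B ∧
    (∀ i ≤ n, IsIndepSet G (W i) ∧ (W i).card = A.card) ∧
    (∀ i < n, (W (i + 1) \ W i).card ≤ k)

/-!
Fix a minimum vertex cover `C`; its complement `R` is independent, and since the complement of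
any independent set is a vertex cover, every independent set has at most `|R|` vertices. An
independent set `S` therefore jumps in one move into `R`: keep `S \ C` and replace the at most
`|C|` vertices of `S ∩ C` by fresh vertices of `R`. Inside the independent set `R` any two subsets
of equal size are joined by single-vertex swaps.
-/

open Finset Relation

lemma IsIndepSet.mono_s2 {V : Type*} {G : SimpleGraph V} {S R : Finset V} (hR : IsIndepSet G R)
    (h : S ⊆ R) : IsIndepSet G S :=
  fun u hu v hv => hR u (h hu) v (h hv)

section VertexCover

variable {V : Type*} [Fintype V] {G : SimpleGraph V}

lemma IsVertexCover.isIndepSet_compl [DecidableEq V] {C : Finset V} (hC : IsVertexCover G C) :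
    IsIndepSet G Cᶜ := by
  intro u hu v hv hadj
  rcases hC u v hadj with h | h
  · exact mem_compl.mp hu h
  · exact mem_compl.mp hv h

lemma IsIndepSet.isVertexCover_compl [DecidableEq V] {S : Finset V} (hS : IsIndepSet G S) :
    IsVertexCover G Sᶜ := by
  intro u v hadj
  by_contra! h
  exact hS u (by simpa using h.1) v (by simpa using h.2) hadj

lemma exists_isVertexCover_card_eq_vcNum (G : SimpleGraph V) :
    ∃ C, IsVertexCover G C ∧ C.card = vcNum V G :=
  Nat.sInf_mem (s := {n | ∃ C : Finset V, IsVertexCover G C ∧ C.card = n})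
    ⟨_, univ, fun u _ _ => Or.inl (mem_univ u), rfl⟩

lemma vcNum_le_card {C : Finset V} (hC : IsVertexCover G C) : vcNum V G ≤ C.card :=
  Nat.sInf_le ⟨C, hC, rfl⟩

lemma IsIndepSet.card_le_card_compl [DecidableEq V] {S C : Finset V} (hS : IsIndepSet G S)
    (hmin : C.card = vcNum V G) : S.card ≤ Cᶜ.card := by
  have hcover := vcNum_le_card hS.isVertexCover_compl
  rw [card_compl] at hcover
  rw [card_compl, hmin]
  have := S.card_le_univ
  omega

end VertexCover

lemma Finset.exists_subset_card_eq_sdiff_card_le {α : Type*} [DecidableEq α] {S R : Finset α}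
    (h : S.card ≤ R.card) : ∃ S' ⊆ R, S'.card = S.card ∧ (S' \ S).card ≤ (S \ R).card := by
  obtain ⟨T, hTR, hT⟩ := exists_subset_card_eq (s := R \ S) (n := (S \ R).card) (by grind)
  have hdisj : Disjoint (S ∩ R) T :=
    disjoint_left.2 fun a ha hb => (mem_sdiff.1 (hTR hb)).2 (mem_inter.1 ha).1
  refine ⟨S ∩ R ∪ T, union_subset inter_subset_right (hTR.trans sdiff_subset), ?_, ?_⟩
  · rw [card_union_of_disjoint hdisj, hT, card_inter_add_card_sdiff]
  · calc #((S ∩ R ∪ T) \ S) ≤ #T := card_le_card (by grind)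
      _ = #(S \ R) := hT

section Reconfiguration

variable {V : Type*} [DecidableEq V]

def MTJStep (G : SimpleGraph V) (k : ℕ) (A B : Finset V) : Prop :=
  IsIndepSet G B ∧ B.card = A.card ∧ (B \ A).card ≤ k

variable {G : SimpleGraph V} {k : ℕ}

lemma MTJReconf.of_reflTransGen {A B : Finset V} (hA : IsIndepSet G A)
    (h : ReflTransGen (MTJStep G k) A B) : MTJReconf G k A B := by
  induction h with
  | refl => exact ⟨0, fun _ => A, rfl, rfl, fun _ _ => ⟨hA, rfl⟩, by simp⟩
  | @tail B C _ hBC ih =>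
    obtain ⟨n, W, h0, hn, hind, hjump⟩ := ih
    obtain ⟨hC, hCB, hCk⟩ := hBC
    refine ⟨n + 1, fun i => if i ≤ n then W i else C, by simp [h0], by simp, ?_, ?_⟩
    · intro i hi
      dsimp only
      split_ifs with h
      · exact hind i h
      · exact ⟨hC, hCB.trans (hn ▸ (hind n le_rfl).2)⟩
    · intro i hi
      by_cases h : i < n
      · simpa [h, h.le, Nat.succ_le_of_lt h] using hjump i h
      · obtain rfl : i = n := by omega
        simpa [hn] using hCk

lemma reflTransGen_mtjStep_of_subset {R S S' : Finset V} (hR : IsIndepSet G R) (hk : 1 ≤ k)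
    (hS : S ⊆ R) (hS' : S' ⊆ R) (hc : S.card = S'.card) :
    ReflTransGen (MTJStep G k) S S' := by
  induction hn : #(S' \ S) generalizing S with
  | zero =>
    obtain rfl : S = S' :=
      (eq_of_subset_of_card_le (sdiff_eq_empty_iff_subset.1 (card_eq_zero.1 hn)) hc.le).symm
    exact .refl
  | succ n ih =>
    obtain ⟨x, hx⟩ : (S' \ S).Nonempty := card_pos.1 (by omega)
    obtain ⟨y, hy⟩ : (S \ S').Nonempty := card_pos.1 (by rw [card_sdiff_comm hc]; omega)
    rw [mem_sdiff] at hx hy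
    have hT : #(insert x (S.erase y)) = #S := by grind
    have hTR : insert x (S.erase y) ⊆ R := by grind
    have hST : S' \ insert x (S.erase y) = (S' \ S).erase x := by
      ext z
      simp only [mem_sdiff, mem_insert, mem_erase]
      grind
    refine .head ⟨hR.mono_s2 hTR, hT, hk.trans' ?_⟩ (ih hTR (hT.trans hc) ?_)
    · calc #(insert x (S.erase y) \ S) ≤ #{x} := card_le_card (by grind)
        _ = 1 := card_singleton x
    · rw [hST, card_erase_of_mem (mem_sdiff.2 hx), hn, Nat.add_sub_cancel]

end Reconfiguration

theorem mtj_le_vertexCover_general {V : Type*} [Fintype V] [DecidableEq V]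
    (G : SimpleGraph V) (I J : Finset V) (hI : IsIndepSet G I) (hJ : IsIndepSet G J)
    (hcard : I.card = J.card) :
    MTJReconf G (max (vcNum V G) 1) I J := by
  set k := max (vcNum V G) 1
  obtain ⟨C, hC, hmin⟩ := exists_isVertexCover_card_eq_vcNum G
  have hCk : #C ≤ k := hmin ▸ le_max_left _ _
  have hR : IsIndepSet G Cᶜ := hC.isIndepSet_compl
  have hjump (S : Finset V) : #(S \ Cᶜ) ≤ k :=
    (card_le_card (sdiff_compl (x := S) ▸ inter_subset_right)).trans hCk
  obtain ⟨I', hI'R, hI'card, hI'new⟩ :=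
    exists_subset_card_eq_sdiff_card_le (hI.card_le_card_compl hmin)
  obtain ⟨J', hJ'R, hJ'card, hJ'new⟩ :=
    exists_subset_card_eq_sdiff_card_le (hJ.card_le_card_compl hmin)
  have stepIn : MTJStep G k I I' := ⟨hR.mono_s2 hI'R, hI'card, hI'new.trans (hjump I)⟩
  have inside : ReflTransGen (MTJStep G k) I' J' :=
    reflTransGen_mtjStep_of_subset hR (le_max_right _ _) hI'R hJ'R (by omega)
  have stepOut : MTJStep G k J' J :=
    ⟨hJ, hJ'card.symm, card_sdiff_comm hJ'card.symm ▸ hJ'new.trans (hjump J)⟩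
  exact .of_reflTransGen hI ((inside.head stepIn).tail stepOut)

/-- in any graph with at least one vertex, any two independent sets of equal
size can be MTJ reconfigured into each other with jumps of size at most `max (vc G) 1`. -/
theorem mtj_le_vertexCover {V : Type*} [Fintype V] [DecidableEq V] [Nonempty V]
    (G : SimpleGraph V) (I J : Finset V) (hI : IsIndepSet G I) (hJ : IsIndepSet G J)
    (hcard : I.card = J.card) :
    MTJReconf G (max (vcNum V G) 1) I J :=
  mtj_le_vertexCover_general G I J hI hJ hcard
end

section
/- Every pumpkin graph is bistable: it is connected, bipartite, and its only two maximum independent sets are the two partite sets of its unique bipartition. -/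
/-- `G` is a pumpkin: two distinct terminal vertices `u` and `v` are joined by `m ≥ 2`
internally vertex-disjoint paths of odd length, and `G` has no other vertices or edges. -/
def IsPumpkin {V : Type*} (G : SimpleGraph V) : Prop :=
  ∃ (u v : V) (m : ℕ) (P : Fin m → G.Walk u v),
    2 ≤ m ∧ u ≠ v ∧
    (∀ i, (P i).IsPath ∧ Odd (P i).length) ∧
    (∀ i j, i ≠ j → ∀ w, w ∈ (P i).support → w ∈ (P j).support → w = u ∨ w = v) ∧
    (∀ w : V, ∃ i, w ∈ (P i).support) ∧
    (∀ a b, G.Adj a b → ∃ i, s(a, b) ∈ (P i).edges)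

/-- `G` is bistable: connected, bipartite with partite sets `A` and `B`, both of which are
independent and of equal size, and every independent set of maximum size equals `A` or `B`. -/
def IsBistable {V : Type*} [Fintype V] [DecidableEq V] (G : SimpleGraph V) : Prop :=
  G.Connected ∧ ∃ A B : Finset V,
    A ∪ B = Finset.univ ∧ Disjoint A B ∧ A ≠ B ∧ A.card = B.card ∧
    IsIndepSet G A ∧ IsIndepSet G B ∧
    (∀ S : Finset V, IsIndepSet G S → A.card ≤ S.card → S = A ∨ S = B)

namespace PumpkinAux


variable {α : Type*}

/-- Elements at even positions. -/
def evens : List α → List α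
  | [] => []
  | [a] => [a]
  | a :: _ :: t => a :: evens t

/-- Elements at odd positions. -/
def odds : List α → List α
  | [] => []
  | [_] => []
  | _ :: b :: t => b :: odds t

theorem two_step_induction {motive : List α → Prop} (h0 : motive []) (h1 : ∀ a, motive [a])
    (h2 : ∀ a b t, motive t → motive (b :: t) → motive (a :: b :: t)) : ∀ L, motive L := by
  have key : ∀ n (L : List α), L.length ≤ n → motive L := by
    intro n
    induction n with
    | zero => intro L hL; rw [List.length_eq_zero_iff.1 (Nat.le_zero.1 hL)]; exact h0
    | succ n ih =>
      intro L hL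
      match L with
      | [] => exact h0
      | [a] => exact h1 a
      | a :: b :: t =>
        simp only [List.length_cons] at hL
        exact h2 a b t (ih t (by omega)) (ih (b :: t) (by simp; omega))
  exact fun L => key L.length L le_rfl

@[simp] theorem length_evens : ∀ L : List α, (evens L).length = (L.length + 1) / 2 := by
  refine two_step_induction (by simp [evens]) (by simp [evens]) ?_
  intro a b t ih _
  simp [evens, ih]; omega

@[simp] theorem length_odds : ∀ L : List α, (odds L).length = L.length / 2 := by
  refine two_step_induction (by simp [odds]) (by simp [odds]) ?_
  intro a b t ih _
  simp [odds, ih]; omega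

theorem evens_sublist : ∀ L : List α, List.Sublist (evens L) L := by
  refine two_step_induction (by simp [evens]) (by simp [evens]) ?_
  intro a b t ih _
  simpa [evens] using (ih.cons b).cons₂ a

theorem odds_sublist : ∀ L : List α, List.Sublist (odds L) L := by
  refine two_step_induction (by simp [odds]) (by simp [odds]) ?_
  intro a b t ih _
  simpa [odds] using (ih.cons₂ b).cons a

theorem mem_evens_iff : ∀ L : List α, ∀ x, (x ∈ evens L ↔ ∃ k : ℕ, Even k ∧ L[k]? = some x) := by
  refine two_step_induction ?_ ?_ ?_
  · simp [evens]
  · intro a x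
    simp only [evens, List.mem_singleton]
    constructor
    · rintro rfl; exact ⟨0, Even.zero, rfl⟩
    · rintro ⟨k, -, hk⟩
      match k with
      | 0 => simpa using hk.symm
      | k + 1 => simp at hk
  · intro a b t ih _ x
    simp only [evens, List.mem_cons, ih]
    constructor
    · rintro (rfl | ⟨k, hk, hget⟩)
      · exact ⟨0, Even.zero, rfl⟩
      · exact ⟨k + 2, by rcases hk with ⟨r, hr⟩; exact ⟨r + 1, by omega⟩, by simpa using hget⟩
    · rintro ⟨k, hk, hget⟩
      match k with
      | 0 => exact Or.inl (by simpa using hget.symm)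
      | 1 => exact absurd hk (by simp)
      | k + 2 => exact Or.inr ⟨k, by rcases hk with ⟨r, hr⟩; exact ⟨r - 1, by omega⟩, by simpa using hget⟩

theorem mem_odds_iff : ∀ L : List α, ∀ x, (x ∈ odds L ↔ ∃ k : ℕ, Odd k ∧ L[k]? = some x) := by
  refine two_step_induction ?_ ?_ ?_
  · simp [odds]
  · intro a x
    simp only [odds, List.not_mem_nil, false_iff, not_exists]
    rintro k ⟨hk, hget⟩
    match k with
    | 0 => simp at hk
    | k + 1 => simp at hget
  · intro a b t ih _ x
    simp only [odds, List.mem_cons, ih]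
    constructor
    · rintro (rfl | ⟨k, hk, hget⟩)
      · exact ⟨1, odd_one, by simp⟩
      · exact ⟨k + 2, by rcases hk with ⟨r, hr⟩; exact ⟨r + 1, by omega⟩, by simpa using hget⟩
    · rintro ⟨k, hk, hget⟩
      match k with
      | 0 => exact absurd hk (by simp)
      | 1 => exact Or.inl (by simpa using hget.symm)
      | k + 2 => exact Or.inr ⟨k, by rcases hk with ⟨r, hr⟩; exact ⟨r - 1, by omega⟩, by simpa using hget⟩

theorem mem_evens_or_odds {L : List α} {x : α} (hx : x ∈ L) : x ∈ evens L ∨ x ∈ odds L := by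
  obtain ⟨k, hk, hget⟩ := List.mem_iff_getElem.1 hx
  rcases Nat.even_or_odd k with h | h
  · exact Or.inl ((mem_evens_iff L x).2 ⟨k, h, by rw [List.getElem?_eq_getElem hk, hget]⟩)
  · exact Or.inr ((mem_odds_iff L x).2 ⟨k, h, by rw [List.getElem?_eq_getElem hk, hget]⟩)

theorem mem_evens_tail_iff {L : List α} {x : α} : x ∈ evens L.tail ↔ x ∈ odds L := by
  rw [mem_evens_iff, mem_odds_iff]
  constructor
  · rintro ⟨k, hk, hget⟩
    exact ⟨k + 1, Even.add_one hk, by rwa [← List.getElem?_tail]⟩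
  · rintro ⟨k, hk, hget⟩
    match k with
    | 0 => exact absurd hk (by simp)
    | k + 1 =>
      refine ⟨k, ?_, by rwa [List.getElem?_tail]⟩
      rcases hk with ⟨r, hr⟩; exact ⟨r, by omega⟩

theorem mem_evens_dropLast_iff {L : List α} (hL : Even L.length) {x : α} :
    x ∈ evens L.dropLast ↔ x ∈ evens L := by
  rw [mem_evens_iff, mem_evens_iff]
  constructor
  · rintro ⟨k, hk, hget⟩
    have hlt : k < L.dropLast.length := (List.getElem?_eq_some_iff.1 hget).1
    rw [List.length_dropLast] at hlt
    refine ⟨k, hk, ?_⟩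
    rwa [List.getElem?_dropLast, if_pos hlt] at hget
  · rintro ⟨k, hk, hget⟩
    have hlt : k < L.length := (List.getElem?_eq_some_iff.1 hget).1
    have : k ≠ L.length - 1 := by
      rintro rfl
      rcases hk with ⟨r, hr⟩; rcases hL with ⟨s, hs⟩; omega
    refine ⟨k, hk, ?_⟩
    rw [List.getElem?_dropLast, if_pos (by omega)]
    exact hget

section Filter

variable (p : α → Bool)

theorem filter_length_le : ∀ L : List α,
    List.Chain' (fun a b => ¬(p a ∧ p b)) L → 2 * (L.filter p).length ≤ L.length + 1 := by
  refine two_step_induction (by simp) (by intro a _; by_cases h : p a <;> simp [h]) ?_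
  intro a b t ih ih2 hc
  unfold List.Chain' at hc; rw [List.isChain_cons_cons] at hc
  by_cases ha : p a
  · have hb : ¬ p b := fun hb => hc.1 ⟨ha, hb⟩
    have := ih (hc.2.tail)
    rw [List.filter_cons_of_pos ha, List.filter_cons_of_neg hb]
    simp only [List.length_cons] at this ⊢
    omega
  · have := ih2 hc.2
    rw [List.filter_cons_of_neg ha]
    simp only [List.length_cons] at this ⊢
    omega

theorem filter_eq_evens : ∀ L : List α,
    List.Chain' (fun a b => ¬(p a ∧ p b)) L → Odd L.length →
    2 * (L.filter p).length = L.length + 1 → L.filter p = evens L := by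
  refine two_step_induction (by simp) ?_ ?_
  · intro a _ _ h
    by_cases ha : p a
    · simp [List.filter_cons_of_pos ha, evens]
    · simp [List.filter_cons_of_neg ha] at h
  · intro a b t ih _ hc hodd heq
    unfold List.Chain' at hc; rw [List.isChain_cons_cons] at hc
    by_cases ha : p a
    · have hb : ¬ p b := fun hb => hc.1 ⟨ha, hb⟩
      rw [List.filter_cons_of_pos ha, List.filter_cons_of_neg hb] at heq ⊢
      simp only [List.length_cons] at heq hodd
      have ht : t.filter p = evens t := by
        refine ih hc.2.tail ?_ (by omega)
        rcases hodd with ⟨r, hr⟩; exact ⟨r - 1, by omega⟩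
      rw [ht]; rfl
    · exfalso
      rw [List.filter_cons_of_neg ha] at heq
      have := filter_length_le p (b :: t) hc.2
      simp only [List.length_cons] at this heq
      omega

theorem filter_eq_filter_dropLast {L : List α} (h : L ≠ [])
    (hlast : ¬ p (L.getLast h)) : L.filter p = L.dropLast.filter p := by
  conv_lhs => rw [← List.dropLast_append_getLast h]
  rw [List.filter_append, List.filter_cons_of_neg hlast, List.filter_nil,
    List.append_nil]

end Filter

theorem walk_edge_consec {V : Type*} {G : SimpleGraph V} {u v : V} (w : G.Walk u v) {a b : V}
    (h : s(a, b) ∈ w.edges) :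
    ∃ k : ℕ, (w.support[k]? = some a ∧ w.support[k+1]? = some b) ∨
             (w.support[k]? = some b ∧ w.support[k+1]? = some a) := by
  induction w with
  | nil => simp at h
  | @cons x y z hadj p ih =>
    rw [SimpleGraph.Walk.edges_cons, List.mem_cons] at h
    rcases h with h | h
    · rw [Sym2.eq_iff] at h
      refine ⟨0, ?_⟩
      have hsup : p.support[0]? = some y := by rw [p.support_eq_cons]; simp
      rcases h with ⟨rfl, rfl⟩ | ⟨rfl, rfl⟩
      · exact Or.inl ⟨by simp [SimpleGraph.Walk.support_cons], by
          simpa [SimpleGraph.Walk.support_cons] using hsup⟩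
      · exact Or.inr ⟨by simp [SimpleGraph.Walk.support_cons], by
          simpa [SimpleGraph.Walk.support_cons] using hsup⟩
    · obtain ⟨k, hk⟩ := ih h
      refine ⟨k + 1, ?_⟩
      simpa [SimpleGraph.Walk.support_cons] using hk


theorem mem_of_getElem? {l : List α} {n : ℕ} {a : α} (h : l[n]? = some a) : a ∈ l := by
  have := List.getElem?_eq_some_iff.1 h
  exact this.2 ▸ List.getElem_mem _

theorem main {V : Type*} [Fintype V] [DecidableEq V] (G : SimpleGraph V)
    (u v : V) (m : ℕ) (P : Fin m → G.Walk u v)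
    (hm : 2 ≤ m) (huv : u ≠ v)
    (hpath : ∀ i, (P i).IsPath ∧ Odd (P i).length)
    (hdisj : ∀ i j, i ≠ j → ∀ w, w ∈ (P i).support → w ∈ (P j).support → w = u ∨ w = v)
    (hcover : ∀ w : V, ∃ i, w ∈ (P i).support)
    (hedge : ∀ a b, G.Adj a b → ∃ i, s(a, b) ∈ (P i).edges) :
    IsBistable G := by
  set L : Fin m → List V := fun i => (P i).support with hLdef
  have hnd : ∀ i, (L i).Nodup := fun i => (hpath i).1.support_nodup
  have hlen : ∀ i, (L i).length = (P i).length + 1 := fun i => (P i).length_support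
  have heven : ∀ i, Even (L i).length := by
    intro i
    rw [hlen i]
    exact (hpath i).2.add_one
  have hlen2 : ∀ i, 2 ≤ (L i).length := by
    intro i
    have h1 : 1 ≤ (P i).length := (hpath i).2.pos
    have := hlen i
    omega
  have hLne : ∀ i, L i ≠ [] := fun i => List.ne_nil_of_length_pos (by have := hlen2 i; omega)
  have h0 : ∀ i, (L i)[0]? = some u := by
    intro i
    rw [hLdef]
    simp only []
    rw [(P i).support_eq_cons]
    simp
  have hlast : ∀ i, (L i)[(L i).length - 1]? = some v := by
    intro i
    rw [List.getElem?_eq_getElem (by have := hlen2 i; omega)]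
    rw [← List.getLast_eq_getElem (hLne i)]
    rw [show (L i).getLast (hLne i) = v from (P i).getLast_support]
  have hposu : ∀ i k, (L i)[k]? = some u → k = 0 := by
    intro i k hk
    have hlt : k < (L i).length := (List.getElem?_eq_some_iff.1 hk).1
    exact (List.getElem?_inj hlt (hnd i)).1 (by rw [hk, h0 i])
  have hposv : ∀ i k, (L i)[k]? = some v → k = (L i).length - 1 := by
    intro i k hk
    have hlt : k < (L i).length := (List.getElem?_eq_some_iff.1 hk).1
    exact (List.getElem?_inj hlt (hnd i)).1 (by rw [hk, hlast i])
  -- the two sides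
  set A : Finset V := Finset.univ.filter (fun w => ∃ i, w ∈ evens (L i)) with hAdef
  set B : Finset V := Finset.univ.filter (fun w => ∃ i, w ∈ odds (L i)) with hBdef
  have hmemA : ∀ w, w ∈ A ↔ ∃ i, w ∈ evens (L i) := by intro w; simp [hAdef]
  have hmemB : ∀ w, w ∈ B ↔ ∃ i, w ∈ odds (L i) := by intro w; simp [hBdef]
  have hvE : ∀ i, v ∉ evens (L i) := by
    intro i hv
    obtain ⟨k, hk, hget⟩ := (mem_evens_iff _ _).1 hv
    have := hposv i k hget
    obtain ⟨s, hs⟩ := heven i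
    obtain ⟨r, hr⟩ := hk
    have := hlen2 i
    omega
  have huO : ∀ i, u ∉ odds (L i) := by
    intro i hu
    obtain ⟨k, hk, hget⟩ := (mem_odds_iff _ _).1 hu
    have := hposu i k hget
    obtain ⟨r, hr⟩ := hk
    omega
  have huE : ∀ i, u ∈ evens (L i) := fun i => (mem_evens_iff _ _).2 ⟨0, Even.zero, h0 i⟩
  have hvO : ∀ i, v ∈ odds (L i) := by
    intro i
    refine (mem_odds_iff _ _).2 ⟨(L i).length - 1, ?_, hlast i⟩
    have := hlen i
    have := (hpath i).2
    obtain ⟨r, hr⟩ := this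
    exact ⟨r, by omega⟩
  have hEO : ∀ i j w, w ∈ evens (L i) → w ∈ odds (L j) → False := by
    intro i j w hwe hwo
    by_cases hij : i = j
    · subst hij
      obtain ⟨k, hk, hgk⟩ := (mem_evens_iff _ _).1 hwe
      obtain ⟨l, hl, hgl⟩ := (mem_odds_iff _ _).1 hwo
      have hlt : k < (L i).length := (List.getElem?_eq_some_iff.1 hgk).1
      have : k = l := (List.getElem?_inj hlt (hnd i)).1 (by rw [hgk, hgl])
      obtain ⟨r, hr⟩ := hk; obtain ⟨s, hs⟩ := hl; omega
    · have h1 : w ∈ L i := (evens_sublist (L i)).subset hwe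
      have h2 : w ∈ L j := (odds_sublist (L j)).subset hwo
      rcases hdisj i j hij w h1 h2 with rfl | rfl
      · exact huO j hwo
      · exact hvE i hwe
  have hAL : ∀ i w, w ∈ A → w ∈ L i → w ∈ evens (L i) := by
    intro i w hwA hwL
    obtain ⟨j, hj⟩ := (hmemA w).1 hwA
    by_cases hij : j = i
    · exact hij ▸ hj
    · have h2 : w ∈ L j := (evens_sublist (L j)).subset hj
      rcases hdisj j i hij w h2 hwL with rfl | rfl
      · exact huE i
      · exact absurd hj (hvE j)
  have hBL : ∀ i w, w ∈ B → w ∈ L i → w ∈ odds (L i) := by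
    intro i w hwB hwL
    obtain ⟨j, hj⟩ := (hmemB w).1 hwB
    by_cases hij : j = i
    · exact hij ▸ hj
    · have h2 : w ∈ L j := (odds_sublist (L j)).subset hj
      rcases hdisj j i hij w h2 hwL with rfl | rfl
      · exact absurd hj (huO j)
      · exact hvO i
  -- position parity of members
  have hApos : ∀ (i : Fin m) (k : ℕ) (w : V), w ∈ A → (L i)[k]? = some w → Even k := by
    intro i k w hwA hget
    have hwe := hAL i w hwA (mem_of_getElem? hget)
    obtain ⟨l, hl, hgl⟩ := (mem_evens_iff _ _).1 hwe
    have hlt : k < (L i).length := (List.getElem?_eq_some_iff.1 hget).1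
    have : k = l := (List.getElem?_inj hlt (hnd i)).1 (by rw [hget, hgl])
    exact this ▸ hl
  have hBpos : ∀ (i : Fin m) (k : ℕ) (w : V), w ∈ B → (L i)[k]? = some w → Odd k := by
    intro i k w hwB hget
    have hwo := hBL i w hwB (mem_of_getElem? hget)
    obtain ⟨l, hl, hgl⟩ := (mem_odds_iff _ _).1 hwo
    have hlt : k < (L i).length := (List.getElem?_eq_some_iff.1 hget).1
    have : k = l := (List.getElem?_inj hlt (hnd i)).1 (by rw [hget, hgl])
    exact this ▸ hl
  have hindepA : IsIndepSet G A := by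
    intro a ha b hb hadj
    obtain ⟨i, hi⟩ := hedge a b hadj
    obtain ⟨k, hk | hk⟩ := walk_edge_consec (P i) hi
    · have h1 := hApos i k a ha hk.1
      have h2 := hApos i (k + 1) b hb hk.2
      obtain ⟨r, hr⟩ := h1; obtain ⟨s, hs⟩ := h2; omega
    · have h1 := hApos i k b hb hk.1
      have h2 := hApos i (k + 1) a ha hk.2
      obtain ⟨r, hr⟩ := h1; obtain ⟨s, hs⟩ := h2; omega
  have hindepB : IsIndepSet G B := by
    intro a ha b hb hadj
    obtain ⟨i, hi⟩ := hedge a b hadj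
    obtain ⟨k, hk | hk⟩ := walk_edge_consec (P i) hi
    · have h1 := hBpos i k a ha hk.1
      have h2 := hBpos i (k + 1) b hb hk.2
      obtain ⟨r, hr⟩ := h1; obtain ⟨s, hs⟩ := h2; omega
    · have h1 := hBpos i k b hb hk.1
      have h2 := hBpos i (k + 1) a ha hk.2
      obtain ⟨r, hr⟩ := h1; obtain ⟨s, hs⟩ := h2; omega
  have hunion : A ∪ B = Finset.univ := by
    ext w
    simp only [Finset.mem_union, Finset.mem_univ, iff_true]
    obtain ⟨i, hi⟩ := hcover w
    rcases mem_evens_or_odds hi with h | h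
    · exact Or.inl ((hmemA w).2 ⟨i, h⟩)
    · exact Or.inr ((hmemB w).2 ⟨i, h⟩)
  have hdisjAB : Disjoint A B := by
    rw [Finset.disjoint_left]
    intro w hwA hwB
    obtain ⟨i, hi⟩ := (hmemA w).1 hwA
    obtain ⟨j, hj⟩ := (hmemB w).1 hwB
    exact hEO i j w hi hj
  have i0 : Fin m := ⟨0, by omega⟩
  have huA : u ∈ A := (hmemA u).2 ⟨i0, huE i0⟩
  have hvB : v ∈ B := (hmemB v).2 ⟨i0, hvO i0⟩
  have huB : u ∉ B := fun h => by
    obtain ⟨j, hj⟩ := (hmemB u).1 h; exact huO j hj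
  have hvA : v ∉ A := fun h => by
    obtain ⟨j, hj⟩ := (hmemA v).1 h; exact hvE j hj
  have hAB : A ≠ B := fun h => huB (h ▸ huA)
  -- counting infrastructure
  set I : Fin m → Finset V := fun i => (L i).toFinset \ {u, v} with hIdef
  have hImem : ∀ i w, w ∈ I i ↔ w ∈ L i ∧ w ≠ u ∧ w ≠ v := by
    intro i w; simp [hIdef]
  have hsplit : ∀ T : Finset V,
      T.card = (T ∩ {u, v}).card + ∑ i, (T ∩ I i).card := by
    intro T
    have hTeq : T = (T ∩ {u, v}) ∪ Finset.univ.biUnion (fun i => T ∩ I i) := by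
      ext w
      simp only [Finset.mem_union, Finset.mem_inter, Finset.mem_biUnion, Finset.mem_univ,
        true_and, Finset.mem_insert, Finset.mem_singleton]
      constructor
      · intro hw
        by_cases hwu : w = u ∨ w = v
        · exact Or.inl ⟨hw, hwu⟩
        · push_neg at hwu
          obtain ⟨i, hi⟩ := hcover w
          exact Or.inr ⟨i, hw, (hImem i w).2 ⟨hi, hwu⟩⟩
      · rintro (⟨hw, -⟩ | ⟨i, hw, -⟩) <;> exact hw
    have hd2 : ∀ x ∈ Finset.univ, ∀ y ∈ Finset.univ, x ≠ y →
        Disjoint (T ∩ I x) (T ∩ I y) := by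
      intro x _ y _ hxy
      refine Finset.disjoint_left.2 fun w hwx hwy => ?_
      have h1 := (hImem x w).1 (Finset.mem_inter.1 hwx).2
      have h2 := (hImem y w).1 (Finset.mem_inter.1 hwy).2
      rcases hdisj x y hxy w h1.1 h2.1 with rfl | rfl
      · exact h1.2.1 rfl
      · exact h1.2.2 rfl
    have hd1 : Disjoint (T ∩ {u, v}) (Finset.univ.biUnion fun i => T ∩ I i) := by
      refine Finset.disjoint_left.2 fun w hw1 hw2 => ?_
      have h1 := (Finset.mem_inter.1 hw1).2
      obtain ⟨i, -, hw2'⟩ := Finset.mem_biUnion.1 hw2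
      have h2 := (hImem i w).1 (Finset.mem_inter.1 hw2').2
      simp only [Finset.mem_insert, Finset.mem_singleton] at h1
      rcases h1 with rfl | rfl
      · exact h2.2.1 rfl
      · exact h2.2.2 rfl
    calc T.card = ((T ∩ {u, v}) ∪ Finset.univ.biUnion fun i => T ∩ I i).card := by
            rw [← hTeq]
      _ = (T ∩ {u, v}).card + (Finset.univ.biUnion fun i => T ∩ I i).card :=
            Finset.card_union_of_disjoint hd1
      _ = (T ∩ {u, v}).card + ∑ i, (T ∩ I i).card := by rw [Finset.card_biUnion hd2]
  have hAinterL : ∀ i, A ∩ (L i).toFinset = (evens (L i)).toFinset := by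
    intro i
    ext w
    simp only [Finset.mem_inter, List.mem_toFinset]
    constructor
    · rintro ⟨h1, h2⟩; exact hAL i w h1 h2
    · intro h
      exact ⟨(hmemA w).2 ⟨i, h⟩, (evens_sublist (L i)).subset h⟩
  have hBinterL : ∀ i, B ∩ (L i).toFinset = (odds (L i)).toFinset := by
    intro i
    ext w
    simp only [Finset.mem_inter, List.mem_toFinset]
    constructor
    · rintro ⟨h1, h2⟩; exact hBL i w h1 h2
    · intro h
      exact ⟨(hmemB w).2 ⟨i, h⟩, (odds_sublist (L i)).subset h⟩
  have hinterI : ∀ (T : Finset V) i, T ∩ I i = (T ∩ (L i).toFinset) \ {u, v} := by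
    intro T i
    ext w
    simp only [Finset.mem_inter, Finset.mem_sdiff, hImem, List.mem_toFinset,
      Finset.mem_insert, Finset.mem_singleton]
    tauto
  have hcardAI : ∀ i, (A ∩ I i).card = (L i).length / 2 - 1 := by
    intro i
    rw [hinterI, hAinterL]
    have hstep : (evens (L i)).toFinset \ {u, v} = (evens (L i)).toFinset \ {u} := by
      ext w
      simp only [Finset.mem_sdiff, List.mem_toFinset, Finset.mem_insert, Finset.mem_singleton]
      constructor
      · rintro ⟨h1, h2⟩; exact ⟨h1, fun h => h2 (Or.inl h)⟩
      · rintro ⟨h1, h2⟩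
        refine ⟨h1, ?_⟩
        rintro (rfl | rfl)
        · exact h2 rfl
        · exact hvE i h1
    rw [hstep, Finset.sdiff_singleton_eq_erase, Finset.card_erase_of_mem
      (List.mem_toFinset.2 (huE i)), List.toFinset_card_of_nodup
      ((hnd i).sublist (evens_sublist (L i))), length_evens]
    obtain ⟨s, hs⟩ := heven i
    have := hlen2 i
    omega
  have hcardBI : ∀ i, (B ∩ I i).card = (L i).length / 2 - 1 := by
    intro i
    rw [hinterI, hBinterL]
    have hstep : (odds (L i)).toFinset \ {u, v} = (odds (L i)).toFinset \ {v} := by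
      ext w
      simp only [Finset.mem_sdiff, List.mem_toFinset, Finset.mem_insert, Finset.mem_singleton]
      constructor
      · rintro ⟨h1, h2⟩; exact ⟨h1, fun h => h2 (Or.inr h)⟩
      · rintro ⟨h1, h2⟩
        refine ⟨h1, ?_⟩
        rintro (rfl | rfl)
        · exact huO i h1
        · exact h2 rfl
    rw [hstep, Finset.sdiff_singleton_eq_erase, Finset.card_erase_of_mem
      (List.mem_toFinset.2 (hvO i)), List.toFinset_card_of_nodup
      ((hnd i).sublist (odds_sublist (L i))), length_odds]
  have hAuv : A ∩ {u, v} = {u} := by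
    ext w
    simp only [Finset.mem_inter, Finset.mem_insert, Finset.mem_singleton]
    constructor
    · rintro ⟨h1, rfl | rfl⟩
      · rfl
      · exact absurd h1 hvA
    · rintro rfl; exact ⟨huA, Or.inl rfl⟩
  have hBuv : B ∩ {u, v} = {v} := by
    ext w
    simp only [Finset.mem_inter, Finset.mem_insert, Finset.mem_singleton]
    constructor
    · rintro ⟨h1, rfl | rfl⟩
      · exact absurd h1 huB
      · rfl
    · rintro rfl; exact ⟨hvB, Or.inr rfl⟩
  have hcardA : A.card = 1 + ∑ i, ((L i).length / 2 - 1) := by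
    rw [hsplit A, hAuv, Finset.card_singleton]
    congr 1
    exact Finset.sum_congr rfl fun i _ => hcardAI i
  have hcardB : B.card = 1 + ∑ i, ((L i).length / 2 - 1) := by
    rw [hsplit B, hBuv, Finset.card_singleton]
    congr 1
    exact Finset.sum_congr rfl fun i _ => hcardBI i
  have hcards : A.card = B.card := by rw [hcardA, hcardB]
  -- connectivity
  have hconn : G.Connected := by
    rw [SimpleGraph.connected_iff]
    refine ⟨fun a b => ?_, ⟨u⟩⟩
    obtain ⟨i, hi⟩ := hcover a
    obtain ⟨j, hj⟩ := hcover b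
    exact (((P i).takeUntil a hi).reachable.symm).trans ((P j).takeUntil b hj).reachable
  refine ⟨hconn, A, B, hunion, hdisjAB, hAB, hcards, hindepA, hindepB, ?_⟩
  -- maximality
  intro S hS hcard
  classical
  set p : V → Bool := fun x => decide (x ∈ S) with hpdef
  have hp : ∀ x, p x = true ↔ x ∈ S := by intro x; simp [hpdef]
  have hchain : ∀ i, List.Chain' (fun a b => ¬(p a ∧ p b)) (L i) := by
    intro i
    refine ((P i).isChain_adj_support).imp fun a b hab => ?_
    rintro ⟨ha, hb⟩
    exact hS a ((hp a).1 ha) b ((hp b).1 hb) hab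
  set c : Fin m → ℕ := fun i => ((L i).filter p).length with hcdef
  have hSL : ∀ i, S ∩ (L i).toFinset = ((L i).filter p).toFinset := by
    intro i
    rw [List.toFinset_filter]
    ext w
    simp only [Finset.mem_inter, List.mem_toFinset, Finset.mem_filter]
    rw [hp w]
    tauto
  have hSLcard : ∀ i, (S ∩ (L i).toFinset).card = c i := by
    intro i
    rw [hSL i, List.toFinset_card_of_nodup ((hnd i).filter p)]
  have hcle : ∀ i, 2 * c i ≤ (L i).length + 1 := fun i => filter_length_le p (L i) (hchain i)
  have hci : ∀ i, ((L i).filter p).length = c i := fun _ => rfl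
  have hchalf : ∀ i, c i ≤ (L i).length / 2 := by
    intro i
    have := hcle i
    obtain ⟨s, hs⟩ := heven i
    omega
  have huL : ∀ i, u ∈ L i := fun i => (P i).start_mem_support
  have hvL : ∀ i, v ∈ L i := fun i => (P i).end_mem_support
  have hgetLast : ∀ i, (L i).getLast (hLne i) = v := fun i => (P i).getLast_support
  have htailne : ∀ i, (L i).tail ≠ [] := by
    intro i
    have := hlen2 i
    exact List.ne_nil_of_length_pos (by rw [List.length_tail]; omega)
  have hcons0 : ∀ i, L i = u :: (L i).tail := fun i => (P i).support_eq_cons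
  have hfcons : ¬ (p u = true) → ∀ i, (L i).filter p = (L i).tail.filter p := by
    intro hpu i
    conv_lhs => rw [hcons0 i]
    rw [List.filter_cons_of_neg hpu]
  by_cases hu : u ∈ S <;> by_cases hv : v ∈ S
  · -- both u and v in S : contradiction
    exfalso
    have hn4 : ∀ i, 4 ≤ (L i).length := by
      intro i
      by_contra hcon
      have hadj : G.Adj u v :=
        SimpleGraph.Walk.adj_of_length_eq_one (p := P i)
          (by have h1 := hlen i; have h2 := hlen2 i; obtain ⟨s, hs⟩ := heven i; omega)
      exact hS u hu v hv hadj
    have hSuv : S ∩ ({u, v} : Finset V) = {u, v} := by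
      ext w
      simp only [Finset.mem_inter, Finset.mem_insert, Finset.mem_singleton]
      constructor
      · rintro ⟨-, h⟩; exact h
      · rintro (rfl | rfl)
        exacts [⟨hu, Or.inl rfl⟩, ⟨hv, Or.inr rfl⟩]
    have hSI : ∀ i, (S ∩ I i).card = c i - 2 := by
      intro i
      have hsub : ({u, v} : Finset V) ⊆ S ∩ (L i).toFinset := by
        intro w hw
        simp only [Finset.mem_insert, Finset.mem_singleton] at hw
        rcases hw with rfl | rfl
        · exact Finset.mem_inter.2 ⟨hu, List.mem_toFinset.2 (huL i)⟩
        · exact Finset.mem_inter.2 ⟨hv, List.mem_toFinset.2 (hvL i)⟩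
      rw [hinterI S i, Finset.card_sdiff_of_subset hsub, hSLcard i, Finset.card_pair huv]
    have hsum1 : ∑ i, (S ∩ I i).card ≤ ∑ i : Fin m, ((L i).length / 2 - 2) := by
      refine Finset.sum_le_sum fun i _ => ?_
      rw [hSI i]
      exact Nat.sub_le_sub_right (hchalf i) 2
    have hsum2 : ∑ i : Fin m, ((L i).length / 2 - 1)
        = ∑ i : Fin m, ((L i).length / 2 - 2) + m := by
      have hpt : ∀ i ∈ Finset.univ, (L i).length / 2 - 1 = ((L i).length / 2 - 2) + 1 := by
        intro i _
        have h4 := hn4 i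
        obtain ⟨s, hs⟩ := heven i
        omega
      rw [Finset.sum_congr rfl hpt, Finset.sum_add_distrib]
      simp
    have hfin := hsplit S
    rw [hSuv, Finset.card_pair huv] at hfin
    rw [hcardA, hsum2] at hcard
    omega
  · -- u in S, v not in S : S = A
    left
    have hSuv : S ∩ ({u, v} : Finset V) = {u} := by
      ext w
      simp only [Finset.mem_inter, Finset.mem_insert, Finset.mem_singleton]
      constructor
      · rintro ⟨h1, rfl | rfl⟩
        · rfl
        · exact absurd h1 hv
      · rintro rfl; exact ⟨hu, Or.inl rfl⟩
    have hSI : ∀ i, (S ∩ I i).card = c i - 1 := by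
      intro i
      have heq2 : S ∩ I i = (S ∩ (L i).toFinset) \ {u} := by
        rw [hinterI S i]
        ext w
        simp only [Finset.mem_sdiff, Finset.mem_inter, Finset.mem_insert, Finset.mem_singleton]
        constructor
        · rintro ⟨h1, h2⟩; exact ⟨h1, fun h => h2 (Or.inl h)⟩
        · rintro ⟨h1, h2⟩
          refine ⟨h1, ?_⟩
          rintro (rfl | rfl)
          · exact h2 rfl
          · exact hv h1.1
      have hsub : ({u} : Finset V) ⊆ S ∩ (L i).toFinset := by
        intro w hw
        simp only [Finset.mem_singleton] at hw
        subst hw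
        exact Finset.mem_inter.2 ⟨hu, List.mem_toFinset.2 (huL i)⟩
      rw [heq2, Finset.card_sdiff_of_subset hsub, hSLcard i, Finset.card_singleton]
    have hc1 : ∀ i, 1 ≤ c i := by
      intro i
      have hmem : u ∈ (L i).filter p := List.mem_filter.2 ⟨huL i, (hp u).2 hu⟩
      rw [← hci i]
      exact List.length_pos_iff.2 (List.ne_nil_of_mem hmem)
    have hforce : ∀ i, c i = (L i).length / 2 := by
      have hpt : ∀ i ∈ Finset.univ, (S ∩ I i).card ≤ (L i).length / 2 - 1 := fun i _ => by
        rw [hSI i]; exact Nat.sub_le_sub_right (hchalf i) 1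
      have h1 := hsplit S
      rw [hSuv, Finset.card_singleton] at h1
      rw [hcardA] at hcard
      have hge : ∑ i, ((L i).length / 2 - 1) ≤ ∑ i, (S ∩ I i).card := by omega
      have heqs : ∑ i, (S ∩ I i).card = ∑ i, ((L i).length / 2 - 1) :=
        le_antisymm (Finset.sum_le_sum hpt) hge
      have hall := (Finset.sum_eq_sum_iff_of_le hpt).1 heqs
      intro i
      have h2 := hall i (Finset.mem_univ i)
      rw [hSI i] at h2
      have h3 := hc1 i
      have h4 := hlen2 i
      obtain ⟨s, hs⟩ := heven i
      omega
    have hfilter : ∀ i w, w ∈ (L i).filter p ↔ w ∈ evens (L i) := by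
      intro i
      have hnp : ¬ (p ((L i).getLast (hLne i)) = true) := by
        rw [hgetLast i]
        exact fun h => hv ((hp v).1 h)
      have hfd := filter_eq_filter_dropLast p (hLne i) hnp
      have hchainN := (hchain i).prefix (List.dropLast_prefix (L i))
      have hoddN : Odd (L i).dropLast.length := by
        rw [List.length_dropLast]
        obtain ⟨s, hs⟩ := heven i
        have := hlen2 i
        exact ⟨s - 1, by omega⟩
      have heqN : 2 * ((L i).dropLast.filter p).length = (L i).dropLast.length + 1 := by
        rw [← hfd, hci i, List.length_dropLast]
        have h1 := hforce i
        have h2 := hlen2 i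
        obtain ⟨s, hs⟩ := heven i
        omega
      have hev := filter_eq_evens p (L i).dropLast hchainN hoddN heqN
      intro w
      rw [hfd, hev]
      exact mem_evens_dropLast_iff (heven i)
    ext w
    obtain ⟨i, hi⟩ := hcover w
    constructor
    · intro hwS
      exact (hmemA w).2 ⟨i, (hfilter i w).1 (List.mem_filter.2 ⟨hi, (hp w).2 hwS⟩)⟩
    · intro hwA
      have := (hfilter i w).2 (hAL i w hwA hi)
      exact (hp w).1 (List.of_mem_filter this)
  · -- v in S, u not in S : S = B
    right
    have hpu : ¬ (p u = true) := fun h => hu ((hp u).1 h)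
    have hSuv : S ∩ ({u, v} : Finset V) = {v} := by
      ext w
      simp only [Finset.mem_inter, Finset.mem_insert, Finset.mem_singleton]
      constructor
      · rintro ⟨h1, rfl | rfl⟩
        · exact absurd h1 hu
        · rfl
      · rintro rfl; exact ⟨hv, Or.inr rfl⟩
    have hSI : ∀ i, (S ∩ I i).card = c i - 1 := by
      intro i
      have heq2 : S ∩ I i = (S ∩ (L i).toFinset) \ {v} := by
        rw [hinterI S i]
        ext w
        simp only [Finset.mem_sdiff, Finset.mem_inter, Finset.mem_insert, Finset.mem_singleton]
        constructor
        · rintro ⟨h1, h2⟩; exact ⟨h1, fun h => h2 (Or.inr h)⟩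
        · rintro ⟨h1, h2⟩
          refine ⟨h1, ?_⟩
          rintro (rfl | rfl)
          · exact hu h1.1
          · exact h2 rfl
      have hsub : ({v} : Finset V) ⊆ S ∩ (L i).toFinset := by
        intro w hw
        simp only [Finset.mem_singleton] at hw
        subst hw
        exact Finset.mem_inter.2 ⟨hv, List.mem_toFinset.2 (hvL i)⟩
      rw [heq2, Finset.card_sdiff_of_subset hsub, hSLcard i, Finset.card_singleton]
    have hc1 : ∀ i, 1 ≤ c i := by
      intro i
      have hmem : v ∈ (L i).filter p := List.mem_filter.2 ⟨hvL i, (hp v).2 hv⟩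
      rw [← hci i]
      exact List.length_pos_iff.2 (List.ne_nil_of_mem hmem)
    have hforce : ∀ i, c i = (L i).length / 2 := by
      have hpt : ∀ i ∈ Finset.univ, (S ∩ I i).card ≤ (L i).length / 2 - 1 := fun i _ => by
        rw [hSI i]; exact Nat.sub_le_sub_right (hchalf i) 1
      have h1 := hsplit S
      rw [hSuv, Finset.card_singleton] at h1
      rw [hcardA] at hcard
      have hge : ∑ i, ((L i).length / 2 - 1) ≤ ∑ i, (S ∩ I i).card := by omega
      have heqs : ∑ i, (S ∩ I i).card = ∑ i, ((L i).length / 2 - 1) :=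
        le_antisymm (Finset.sum_le_sum hpt) hge
      have hall := (Finset.sum_eq_sum_iff_of_le hpt).1 heqs
      intro i
      have h2 := hall i (Finset.mem_univ i)
      rw [hSI i] at h2
      have h3 := hc1 i
      have h4 := hlen2 i
      obtain ⟨s, hs⟩ := heven i
      omega
    have hfilter : ∀ i w, w ∈ (L i).filter p ↔ w ∈ odds (L i) := by
      intro i
      have hfd := hfcons hpu i
      have hchainT := (hchain i).tail
      have hoddT : Odd (L i).tail.length := by
        rw [List.length_tail]
        obtain ⟨s, hs⟩ := heven i
        have := hlen2 i
        exact ⟨s - 1, by omega⟩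
      have heqT : 2 * ((L i).tail.filter p).length = (L i).tail.length + 1 := by
        rw [← hfd, hci i, List.length_tail]
        have h1 := hforce i
        have h2 := hlen2 i
        obtain ⟨s, hs⟩ := heven i
        omega
      have hev := filter_eq_evens p (L i).tail hchainT hoddT heqT
      intro w
      rw [hfd, hev]
      exact mem_evens_tail_iff
    ext w
    obtain ⟨i, hi⟩ := hcover w
    constructor
    · intro hwS
      exact (hmemB w).2 ⟨i, (hfilter i w).1 (List.mem_filter.2 ⟨hi, (hp w).2 hwS⟩)⟩
    · intro hwB
      have := (hfilter i w).2 (hBL i w hwB hi)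
      exact (hp w).1 (List.of_mem_filter this)
  · -- neither u nor v in S : contradiction
    exfalso
    have hpu : ¬ (p u = true) := fun h => hu ((hp u).1 h)
    have hSuv : S ∩ ({u, v} : Finset V) = ∅ := by
      ext w
      simp only [Finset.mem_inter, Finset.mem_insert, Finset.mem_singleton,
        Finset.notMem_empty, iff_false]
      rintro ⟨h1, rfl | rfl⟩
      · exact hu h1
      · exact hv h1
    have hSI : ∀ i, (S ∩ I i).card = c i := by
      intro i
      have heq2 : (S ∩ (L i).toFinset) \ ({u, v} : Finset V) = S ∩ (L i).toFinset := by
        ext w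
        simp only [Finset.mem_sdiff, Finset.mem_inter, Finset.mem_insert, Finset.mem_singleton]
        constructor
        · rintro ⟨h1, -⟩; exact h1
        · intro h1
          refine ⟨h1, ?_⟩
          rintro (rfl | rfl)
          · exact hu h1.1
          · exact hv h1.1
      rw [hinterI S i, heq2, hSLcard i]
    have hbound : ∀ i, c i ≤ (L i).length / 2 - 1 := by
      intro i
      have h1 := hfcons hpu i
      have hgl : (L i).tail.getLast (htailne i) = v := by
        rw [List.getLast_tail]
        exact hgetLast i
      have hnp : ¬ (p ((L i).tail.getLast (htailne i)) = true) := by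
        rw [hgl]
        exact fun h => hv ((hp v).1 h)
      have h2 := filter_eq_filter_dropLast p (htailne i) hnp
      have hchainD := ((hchain i).tail).prefix (List.dropLast_prefix _)
      have hle := filter_length_le p ((L i).tail.dropLast) hchainD
      rw [← h2, ← h1, hci i, List.length_dropLast, List.length_tail] at hle
      have h4 := hlen2 i
      obtain ⟨s, hs⟩ := heven i
      omega
    have h1 := hsplit S
    rw [hSuv, Finset.card_empty] at h1
    have hsum : ∑ i, (S ∩ I i).card ≤ ∑ i : Fin m, ((L i).length / 2 - 1) := by
      refine Finset.sum_le_sum fun i _ => ?_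
      rw [hSI i]
      exact hbound i
    rw [hcardA] at hcard
    omega


end PumpkinAux

/-- every pumpkin graph is bistable. -/
theorem pumpkin_isBistable {V : Type*} [Fintype V] [DecidableEq V] (G : SimpleGraph V)
    (h : IsPumpkin G) : IsBistable G := by
  obtain ⟨u, v, m, P, hm, huv, hpath, hdisj, hcover, hedge⟩ := h
  exact PumpkinAux.main G u v m P hm huv hpath hdisj hcover hedge
end

section
/- Every bistable graph has a perfect matching. -/
/-- every bistable graph has a perfect matching. -/
theorem bistable_has_perfectMatching {V : Type*} [Fintype V] [DecidableEq V]
    (G : SimpleGraph V) (h : IsBistable G) :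
    ∃ M : G.Subgraph, M.IsPerfectMatching := by
  classical
  obtain ⟨hconn, A, B, hUnion, hDisj, hAB, hcard, hA, hB, hmax⟩ := h
  have hmem : ∀ v : V, v ∈ A ∨ v ∈ B := fun v => by
    have : v ∈ A ∪ B := hUnion ▸ Finset.mem_univ v
    exact Finset.mem_union.mp this
  set t : {a // a ∈ A} → Finset V :=
    fun a => Finset.univ.filter (fun b => b ∈ B ∧ G.Adj a.1 b) with ht
  -- Hall's condition
  have hall : ∀ s : Finset {a // a ∈ A}, s.card ≤ (s.biUnion t).card := by
    intro s
    by_contra hlt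
    push_neg at hlt
    set S : Finset V := s.image Subtype.val with hS
    set N : Finset V := s.biUnion t with hN
    have hScard : S.card = s.card := Finset.card_image_of_injective _ Subtype.val_injective
    have hSsubA : S ⊆ A := by
      intro x hx
      obtain ⟨a, _, rfl⟩ := Finset.mem_image.mp hx
      exact a.2
    have hNsubB : N ⊆ B := by
      intro x hx
      obtain ⟨a, _, hx⟩ := Finset.mem_biUnion.mp hx
      exact (Finset.mem_filter.mp hx).2.1
    have hTindep : IsIndepSet G ((B \ N) ∪ S) := by
      intro u hu v hv hadj
      rcases Finset.mem_union.mp hu with hu' | hu' <;>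
        rcases Finset.mem_union.mp hv with hv' | hv'
      · exact hB u (Finset.mem_sdiff.mp hu').1 v (Finset.mem_sdiff.mp hv').1 hadj
      · -- u ∈ B \ N, v ∈ S
        obtain ⟨a, ha, rfl⟩ := Finset.mem_image.mp hv'
        have : u ∈ N := Finset.mem_biUnion.mpr ⟨a, ha,
          Finset.mem_filter.mpr ⟨Finset.mem_univ _, (Finset.mem_sdiff.mp hu').1, hadj.symm⟩⟩
        exact (Finset.mem_sdiff.mp hu').2 this
      · obtain ⟨a, ha, rfl⟩ := Finset.mem_image.mp hu'
        have : v ∈ N := Finset.mem_biUnion.mpr ⟨a, ha,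
          Finset.mem_filter.mpr ⟨Finset.mem_univ _, (Finset.mem_sdiff.mp hv').1, hadj⟩⟩
        exact (Finset.mem_sdiff.mp hv').2 this
      · exact hA u (hSsubA hu') v (hSsubA hv') hadj
    have hdisjT : Disjoint (B \ N) S :=
      Finset.disjoint_left.mpr fun x hx hx' =>
        Finset.disjoint_left.mp hDisj (hSsubA hx') (Finset.mem_sdiff.mp hx).1
    have hTcard : ((B \ N) ∪ S).card = B.card - N.card + S.card := by
      rw [Finset.card_union_of_disjoint hdisjT, Finset.card_sdiff_of_subset hNsubB]
    have hNB : N.card ≤ B.card := Finset.card_le_card hNsubB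
    have hbig : A.card < ((B \ N) ∪ S).card := by
      rw [hTcard, hScard, hcard]; omega
    rcases hmax _ hTindep (le_of_lt hbig) with hT | hT
    · rw [hT] at hbig; exact lt_irrefl _ hbig
    · rw [hT] at hbig; omega
  obtain ⟨f, hfinj, hft⟩ := (Finset.all_card_le_biUnion_card_iff_exists_injective t).mp hall
  have hfB : ∀ a, f a ∈ B := fun a => (Finset.mem_filter.mp (hft a)).2.1
  have hfAdj : ∀ a, G.Adj a.1 (f a) := fun a => (Finset.mem_filter.mp (hft a)).2.2
  -- f is a bijection onto B
  have hsurj : ∀ b ∈ B, ∃ a : {a // a ∈ A}, f a = b := by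
    set e : {a // a ∈ A} → {b // b ∈ B} := fun a => ⟨f a, hfB a⟩ with he
    have heinj : Function.Injective e := fun a a' hh =>
      hfinj (congrArg Subtype.val hh)
    have hebij : Function.Bijective e := by
      rw [Fintype.bijective_iff_injective_and_card]
      refine ⟨heinj, ?_⟩
      simp [Fintype.card_coe, hcard]
    intro b hb
    obtain ⟨a, ha⟩ := hebij.2 ⟨b, hb⟩
    exact ⟨a, congrArg Subtype.val ha⟩
  have hAnotB : ∀ {v}, v ∈ A → v ∉ B := fun hv => Finset.disjoint_left.mp hDisj hv
  refine ⟨⟨Set.univ,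
    fun u v => (∃ h : u ∈ A, v = f ⟨u, h⟩) ∨ (∃ h : v ∈ A, u = f ⟨v, h⟩),
    ?_, fun _ => trivial, ?_⟩, ?_, fun v => trivial⟩
  · rintro u v (⟨hu, rfl⟩ | ⟨hv, rfl⟩)
    · exact hfAdj ⟨u, hu⟩
    · exact (hfAdj ⟨v, hv⟩).symm
  · constructor; rintro u v (⟨hu, rfl⟩ | ⟨hv, rfl⟩)
    · exact Or.inr ⟨hu, rfl⟩
    · exact Or.inl ⟨hv, rfl⟩
  · intro v _
    rcases hmem v with hv | hv
    · refine ⟨f ⟨v, hv⟩, Or.inl ⟨hv, rfl⟩, ?_⟩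
      rintro w (⟨hv', rfl⟩ | ⟨hw, rfl⟩)
      · rfl
      · exact absurd (hfB ⟨w, hw⟩) (hAnotB hv)
    · have hvA : v ∉ A := fun hvA => hAnotB hvA hv
      obtain ⟨a, ha⟩ := hsurj v hv
      refine ⟨a.1, Or.inr ⟨a.2, by rw [← ha]⟩, ?_⟩
      rintro w (⟨hv', rfl⟩ | ⟨hw, hweq⟩)
      · exact absurd hv' hvA
      · have : f ⟨w, hw⟩ = f a := by rw [← hweq, ha]
        exact congrArg Subtype.val (hfinj this)
end

section
/- Let G = (I ∪ J, E) be a balanced bipartite graph without isolated vertices, and let S ⊆ I be a nonempty set that is inclusion-wise minimal with the property |S| ≥ |N(S)|. Then the subgraph of G induced by S together with its neighborhood has a matching covering S. -/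
/-- The open neighborhood of a vertex set `S` in `G`. -/
def nbhd {V : Type*} [Fintype V] [DecidableEq V] (G : SimpleGraph V) [DecidableRel G.Adj]
    (S : Finset V) : Finset V :=
  (S.biUnion fun v => G.neighborFinset v) \ S

/-!
Minimality makes every nonempty proper subset `T ⊆ S` strictly expanding, `|T| < |N(T)|`.
For `S` itself, drop one vertex `v`: either `S = {v}`, whose neighbourhood is nonempty as `v`
is not isolated, or `|S| - 1 < |N(S \ {v})| ≤ |N(S)|`. So Hall's condition holds on `S`, and
Hall's marriage theorem gives the matching. Independence of `S` makes `N(T)` the plain union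
of the neighbourhoods of the vertices of `T`, hence monotone in `T`.
-/

namespace IsIndepSet

variable {V : Type*} {G : SimpleGraph V}

theorem mono_s6 {S T : Finset V} (hS : IsIndepSet G S) (hTS : T ⊆ S) : IsIndepSet G T :=
  fun u hu v hv => hS u (hTS hu) v (hTS hv)

variable [Fintype V] [DecidableEq V] [DecidableRel G.Adj]

theorem mem_nbhd_iff {S : Finset V} (hS : IsIndepSet G S) {w : V} :
    w ∈ nbhd G S ↔ ∃ v ∈ S, G.Adj v w := by
  simp only [nbhd, Finset.mem_sdiff, Finset.mem_biUnion, SimpleGraph.mem_neighborFinset]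
  refine ⟨And.left, fun hw => ⟨hw, fun hwS => ?_⟩⟩
  obtain ⟨v, hv, hvw⟩ := hw
  exact hS v hv w hwS hvw

theorem nbhd_mono {S T : Finset V} (hS : IsIndepSet G S) (hTS : T ⊆ S) :
    nbhd G T ⊆ nbhd G S := by
  intro w hw
  obtain ⟨v, hv, hvw⟩ := (hS.mono_s6 hTS).mem_nbhd_iff.mp hw
  exact hS.mem_nbhd_iff.mpr ⟨v, hTS hv, hvw⟩

theorem card_le_card_nbhd_of_minimal {S : Finset V} (hS : IsIndepSet G S)
    (hnoiso : ∀ v : V, ∃ w, G.Adj v w)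
    (hmin : ∀ S' ⊆ S, S'.Nonempty → S' ≠ S → ¬ ((nbhd G S').card ≤ S'.card)) :
    S.card ≤ (nbhd G S).card := by
  rcases S.eq_empty_or_nonempty with rfl | ⟨v, hv⟩
  · simp
  rcases (S.erase v).eq_empty_or_nonempty with hSv | hSv
  · obtain ⟨w, hvw⟩ := hnoiso v
    have hw : w ∈ nbhd G S := hS.mem_nbhd_iff.mpr ⟨v, hv, hvw⟩
    have hS1 : S.card = 1 := by
      rw [← Finset.card_erase_add_one hv, hSv, Finset.card_empty]
    exact hS1 ▸ Finset.card_pos.mpr ⟨w, hw⟩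
  · have hlt := not_le.mp <|
      hmin _ (S.erase_subset v) hSv (Finset.erase_ne_self.mpr hv)
    have hsub := Finset.card_le_card (hS.nbhd_mono (S.erase_subset v))
    have hcard := Finset.card_erase_add_one hv
    omega

theorem hall_of_minimal {S : Finset V} (hS : IsIndepSet G S)
    (hnoiso : ∀ v : V, ∃ w, G.Adj v w)
    (hmin : ∀ S' ⊆ S, S'.Nonempty → S' ≠ S → ¬ ((nbhd G S').card ≤ S'.card))
    {T : Finset V} (hTS : T ⊆ S) :
    T.card ≤ (nbhd G T).card := by
  rcases T.eq_empty_or_nonempty with rfl | hT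
  · simp
  by_cases hTeq : T = S
  · subst hTeq
    exact hS.card_le_card_nbhd_of_minimal hnoiso hmin
  · exact (not_le.mp (hmin T hTS hT hTeq)).le

theorem exists_injective_nbhd {S : Finset V} (hS : IsIndepSet G S)
    (hall : ∀ T ⊆ S, T.card ≤ (nbhd G T).card) :
    ∃ f : {x // x ∈ S} → V, Function.Injective f ∧
      ∀ x : {x // x ∈ S}, f x ∈ nbhd G S ∧ G.Adj x.1 (f x) := by
  have hcond : ∀ s : Finset {x // x ∈ S},
      s.card ≤ (s.biUnion fun x => G.neighborFinset x.1).card := by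
    intro s
    have hsS : s.map (.subtype _) ⊆ S := by
      intro v hv
      obtain ⟨x, -, rfl⟩ := Finset.mem_map.mp hv
      exact x.2
    have hnbhd : nbhd G (s.map (.subtype _)) = s.biUnion fun x => G.neighborFinset x.1 := by
      ext w
      simp [(hS.mono_s6 hsS).mem_nbhd_iff]
    simpa [hnbhd] using hall _ hsS
  obtain ⟨f, hinj, hf⟩ :=
    (Finset.all_card_le_biUnion_card_iff_exists_injective _).mp hcond
  refine ⟨f, hinj, fun x => ?_⟩
  have hadj : G.Adj x.1 (f x) := (SimpleGraph.mem_neighborFinset ..).mp (hf x)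
  exact ⟨hS.mem_nbhd_iff.mpr ⟨x.1, x.2, hadj⟩, hadj⟩

end IsIndepSet

theorem minimal_set_has_saturating_matching_general {V : Type*} [Fintype V] [DecidableEq V]
    (G : SimpleGraph V) [DecidableRel G.Adj] (I : Finset V)
    (hIind : IsIndepSet G I)
    (hnoiso : ∀ v : V, ∃ w, G.Adj v w)
    (S : Finset V) (hSI : S ⊆ I)
    (hmin : ∀ S' ⊆ S, S'.Nonempty → S' ≠ S → ¬ ((nbhd G S').card ≤ S'.card)) :
    ∃ f : {x // x ∈ S} → V, Function.Injective f ∧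
      ∀ x : {x // x ∈ S}, f x ∈ nbhd G S ∧ G.Adj x.1 (f x) := by
  have hS : IsIndepSet G S := hIind.mono_s6 hSI
  exact hS.exists_injective_nbhd fun _ hTS => hS.hall_of_minimal hnoiso hmin hTS

/-- in a balanced bipartite graph without isolated vertices, if `S ⊆ I` is
nonempty and inclusion-wise minimal with `|N(S)| ≤ |S|`, then the subgraph induced by
`S ∪ N(S)` has a matching covering `S` (an injection of `S` into `N(S)` along edges). -/
theorem minimal_set_has_saturating_matching {V : Type*} [Fintype V] [DecidableEq V]
    (G : SimpleGraph V) [DecidableRel G.Adj] (I J : Finset V)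
    (hpart : I ∪ J = Finset.univ) (hdisj : Disjoint I J)
    (hIind : IsIndepSet G I) (hJind : IsIndepSet G J) (hbal : I.card = J.card)
    (hnoiso : ∀ v : V, ∃ w, G.Adj v w)
    (S : Finset V) (hSI : S ⊆ I) (hSne : S.Nonempty)
    (hS : (nbhd G S).card ≤ S.card)
    (hmin : ∀ S' ⊆ S, S'.Nonempty → S' ≠ S → ¬ ((nbhd G S').card ≤ S'.card)) :
    ∃ f : {x // x ∈ S} → V, Function.Injective f ∧
      ∀ x : {x // x ∈ S}, f x ∈ nbhd G S ∧ G.Adj x.1 (f x) :=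
  minimal_set_has_saturating_matching_general G I hIind hnoiso S hSI hmin
end

section
/- Let G = (I ∪ J, E) be a balanced bipartite graph without isolated vertices, and let S ⊆ I be a nonempty set that is inclusion-wise minimal with the property |S| ≥ |N(S)|. Then the subgraph induced by the closed neighborhood N[S] is connected. -/
open Finset

section

variable {V : Type*} [Fintype V] [DecidableEq V] {G : SimpleGraph V} [DecidableRel G.Adj]
  {S : Finset V}

lemma mem_nbhd_iff {w : V} : w ∈ nbhd G S ↔ (∃ s ∈ S, G.Adj s w) ∧ w ∉ S := by
  simp [nbhd]

lemma mem_union_nbhd_of_adj {s w : V} (hs : s ∈ S) (hsw : G.Adj s w) : w ∈ S ∪ nbhd G S := by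
  by_cases hw : w ∈ S
  · exact mem_union_left _ hw
  · exact mem_union_right _ (mem_nbhd_iff.2 ⟨⟨s, hs, hsw⟩, hw⟩)

variable {P : V → Prop} [DecidablePred P]

lemma nbhd_filter_subset_filter_nbhd (hP : ∀ s ∈ S, ∀ w, G.Adj s w → (P s ↔ P w)) :
    nbhd G (S.filter P) ⊆ (nbhd G S).filter P := by
  intro w hw
  obtain ⟨⟨s, hs, hsw⟩, hwP⟩ := mem_nbhd_iff.1 hw
  obtain ⟨hsS, hPs⟩ := mem_filter.1 hs
  have hPw : P w := (hP s hsS w hsw).1 hPs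
  have hwS : w ∉ S := fun hwS => hwP (mem_filter.2 ⟨hwS, hPw⟩)
  exact mem_filter.2 ⟨mem_nbhd_iff.2 ⟨⟨s, hsS, hsw⟩, hwS⟩, hPw⟩

lemma card_nbhd_filter_add_card_nbhd_filter_not_le
    (hP : ∀ s ∈ S, ∀ w, G.Adj s w → (P s ↔ P w)) :
    #(nbhd G (S.filter P)) + #(nbhd G (S.filter (¬ P ·))) ≤ #(nbhd G S) :=
  calc #(nbhd G (S.filter P)) + #(nbhd G (S.filter (¬ P ·)))
      ≤ #((nbhd G S).filter P) + #((nbhd G S).filter (¬ P ·)) :=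
        Nat.add_le_add (card_le_card (nbhd_filter_subset_filter_nbhd hP))
          (card_le_card (nbhd_filter_subset_filter_nbhd fun s hs w hsw =>
            not_congr (hP s hs w hsw)))
    _ = #(nbhd G S) := card_filter_add_card_filter_not _

lemma forall_mem_of_minimal_card_nbhd_le (hS : #(nbhd G S) ≤ #S)
    (hmin : ∀ S' ⊆ S, S'.Nonempty → S' ≠ S → ¬ #(nbhd G S') ≤ #S')
    (hP : ∀ s ∈ S, ∀ w, G.Adj s w → (P s ↔ P w)) {a : V} (ha : a ∈ S) (hPa : P a) :
    ∀ b ∈ S, P b := by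
  by_contra! ⟨b, hb, hPb⟩
  have h₁ := hmin (S.filter P) (filter_subset _ _) ⟨a, mem_filter.2 ⟨ha, hPa⟩⟩
    fun h => hPb (filter_eq_self.1 h b hb)
  have h₂ := hmin (S.filter (¬ P ·)) (filter_subset _ _) ⟨b, mem_filter.2 ⟨hb, hPb⟩⟩
    fun h => filter_eq_self.1 h a ha hPa
  have := card_nbhd_filter_add_card_nbhd_filter_not_le hP
  have := card_filter_add_card_filter_not (s := S) P
  omega

end

theorem minimal_set_closed_nbhd_connected_general {V : Type*} [Fintype V] [DecidableEq V]
    (G : SimpleGraph V) [DecidableRel G.Adj]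
    (S : Finset V) (hSne : S.Nonempty)
    (hS : (nbhd G S).card ≤ S.card)
    (hmin : ∀ S' ⊆ S, S'.Nonempty → S' ≠ S → ¬ ((nbhd G S').card ≤ S'.card)) :
    (G.induce (↑(S ∪ nbhd G S) : Set V)).Connected := by
  classical
  set T := S ∪ nbhd G S
  obtain ⟨s₀, hs₀⟩ := hSne
  have hs₀T : s₀ ∈ T := mem_union_left _ hs₀
  let linked : V → Prop := fun x =>
    ∃ hx : x ∈ T, (G.induce (T : Set V)).Reachable ⟨s₀, hs₀T⟩ ⟨x, hx⟩
  have hlinked : ∀ s ∈ S, ∀ w, G.Adj s w → (linked s ↔ linked w) := by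
    intro s hs w hsw
    have hsT : s ∈ T := mem_union_left _ hs
    have hwT : w ∈ T := mem_union_nbhd_of_adj hs hsw
    have hedge : (G.induce (T : Set V)).Adj ⟨s, hsT⟩ ⟨w, hwT⟩ := hsw
    exact ⟨fun ⟨_, h⟩ => ⟨hwT, h.trans hedge.reachable⟩,
      fun ⟨_, h⟩ => ⟨hsT, h.trans hedge.symm.reachable⟩⟩
  have hlinkedS : ∀ s ∈ S, linked s :=
    forall_mem_of_minimal_card_nbhd_le hS hmin hlinked hs₀ ⟨hs₀T, .refl _⟩
  rw [SimpleGraph.connected_iff_exists_forall_reachable]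
  refine ⟨⟨s₀, hs₀T⟩, fun ⟨x, hx⟩ => ?_⟩
  rcases mem_union.1 hx with hxS | hxN
  · exact (hlinkedS x hxS).2
  · obtain ⟨⟨s, hs, hsx⟩, -⟩ := mem_nbhd_iff.1 hxN
    exact ((hlinked s hs x hsx).1 (hlinkedS s hs)).2

/-- in a balanced bipartite graph without isolated vertices, if `S ⊆ I` is
nonempty and inclusion-wise minimal with `|N(S)| ≤ |S|`, then the subgraph induced by
the closed neighborhood `N[S] = S ∪ N(S)` is connected. -/
theorem minimal_set_closed_nbhd_connected {V : Type*} [Fintype V] [DecidableEq V]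
    (G : SimpleGraph V) [DecidableRel G.Adj] (I J : Finset V)
    (hpart : I ∪ J = Finset.univ) (hdisj : Disjoint I J)
    (hIind : IsIndepSet G I) (hJind : IsIndepSet G J) (hbal : I.card = J.card)
    (hnoiso : ∀ v : V, ∃ w, G.Adj v w)
    (S : Finset V) (hSI : S ⊆ I) (hSne : S.Nonempty)
    (hS : (nbhd G S).card ≤ S.card)
    (hmin : ∀ S' ⊆ S, S'.Nonempty → S' ≠ S → ¬ ((nbhd G S').card ≤ S'.card)) :
    (G.induce (↑(S ∪ nbhd G S) : Set V)).Connected :=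
  minimal_set_closed_nbhd_connected_general G S hSne hS hmin
end

section
/- For any graph G, the TAR reconfiguration threshold of G is at most fvs(G) + 1, where fvs(G) is the minimum size of a feedback vertex set: any two independent sets of equal size can be transformed into one another by single-vertex additions and removals such that every intermediate independent set has size at least |I| - (fvs(G)+1). -/
/-- `S` is a feedback vertex set: deleting `S` leaves an acyclic graph. -/
def IsFVS {V : Type*} [DecidableEq V] (G : SimpleGraph V) (S : Finset V) : Prop :=
  (G.induce {v : V | v ∉ S}).IsAcyclic

/-- The minimum size of a feedback vertex set of `G`. -/
noncomputable def fvsNum (V : Type*) [Fintype V] [DecidableEq V] (G : SimpleGraph V) : ℕ :=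
  sInf {n | ∃ S : Finset V, IsFVS G S ∧ S.card = n}

/-- `A` can be `k`-TAR reconfigured to `B` in `G`. -/
def TARReconf {V : Type*} [DecidableEq V] (G : SimpleGraph V) (k : ℕ)
    (A B : Finset V) : Prop :=
  ∃ (n : ℕ) (W : ℕ → Finset V), W 0 = A ∧ W n = B ∧
    (∀ i ≤ n, IsIndepSet G (W i) ∧ A.card ≤ (W i).card + k) ∧
    (∀ i < n, (symmDiff (W i) (W (i + 1))).card ≤ 1)

set_option linter.unusedSectionVars false

open Finset in

open Finset

section Steps
variable {V : Type*} [DecidableEq V]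

inductive Steps (P : Finset V → Prop) : Finset V → Finset V → Prop
  | refl (A : Finset V) (h : P A) : Steps P A A
  | tail {A B C : Finset V} : Steps P A B → P C → (symmDiff B C).card ≤ 1 → Steps P A C

namespace Steps

theorem left {P : Finset V → Prop} {A B : Finset V} (h : Steps P A B) : P A := by
  induction h with
  | refl h => exact h
  | tail _ _ _ ih => exact ih

theorem right {P : Finset V → Prop} {A B : Finset V} (h : Steps P A B) : P B := by
  induction h with
  | refl h => exact h
  | tail _ h _ _ => exact h

theorem trans {P : Finset V → Prop} {A B C : Finset V} (h1 : Steps P A B)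
    (h2 : Steps P B C) : Steps P A C := by
  induction h2 with
  | refl _ => exact h1
  | tail _ h hc ih => exact tail ih h hc

theorem single {P : Finset V → Prop} {A B : Finset V} (hA : P A) (hB : P B)
    (h : (symmDiff A B).card ≤ 1) : Steps P A B :=
  tail (refl A hA) hB h

theorem symm {P : Finset V → Prop} {A B : Finset V} (h : Steps P A B) : Steps P B A := by
  induction h with
  | refl h => exact refl _ h
  | tail hAB hC hc ih =>
      exact trans (single hC hAB.right (by rwa [symmDiff_comm])) ih

theorem mono {P Q : Finset V → Prop} (hPQ : ∀ A, P A → Q A) {A B : Finset V}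
    (h : Steps P A B) : Steps Q A B := by
  induction h with
  | refl h => exact refl _ (hPQ _ h)
  | tail _ h hc ih => exact tail ih (hPQ _ h) hc

theorem exists_seq {P : Finset V → Prop} {A B : Finset V} (h : Steps P A B) :
    ∃ (n : ℕ) (W : ℕ → Finset V), W 0 = A ∧ W n = B ∧ (∀ i ≤ n, P (W i)) ∧
      (∀ i < n, (symmDiff (W i) (W (i + 1))).card ≤ 1) := by
  induction h with
  | refl h => exact ⟨0, fun _ => A, rfl, rfl, fun i _ => h, fun i hi => by omega⟩
  | @tail B' C' hAB hC hc ih =>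
      obtain ⟨n, W, h0, hn, hP, hstep⟩ := ih
      refine ⟨n + 1, fun i => if i ≤ n then W i else C', by simp [h0], by simp, ?_, ?_⟩
      · intro i hi
        by_cases hin : i ≤ n
        · simpa [hin] using hP i hin
        · simpa [hin] using hC
      · intro i hi
        by_cases hin : i + 1 ≤ n
        · simpa [hin, Nat.le_of_succ_le hin] using hstep i (by omega)
        · have hii : i = n := by omega
          subst hii
          simpa [hin, hn] using hc

end Steps
end Steps

section Helpers
variable {V : Type*} [DecidableEq V]

theorem symmDiff_erase' {s : Finset V} {a : V} (h : a ∈ s) :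
    symmDiff s (s.erase a) = {a} := by
  ext x
  by_cases hx : x = a <;> simp [Finset.mem_symmDiff, hx, h]

theorem symmDiff_insert' {s : Finset V} {a : V} (h : a ∉ s) :
    symmDiff s (insert a s) = {a} := by
  ext x
  by_cases hx : x = a <;> simp [Finset.mem_symmDiff, hx] <;> tauto

theorem IsIndepSet.subset {G : SimpleGraph V} {s t : Finset V} (hs : IsIndepSet G s)
    (hts : t ⊆ s) : IsIndepSet G t :=
  fun u hu v hv => hs u (hts hu) v (hts hv)

theorem steps_erase {G : SimpleGraph V} {k c : ℕ} {A B : Finset V}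
    (hA : IsIndepSet G A) (hBA : B ⊆ A) (hc : c ≤ B.card + k) :
    Steps (fun W => IsIndepSet G W ∧ c ≤ W.card + k) A B := by
  classical
  generalize hn : (A \ B).card = n
  induction n using Nat.strong_induction_on generalizing A with
  | _ n ih =>
    have hPA : IsIndepSet G A ∧ c ≤ A.card + k :=
      ⟨hA, le_trans hc (by have := Finset.card_le_card hBA; omega)⟩
    rcases eq_or_ne A B with rfl | hne
    · exact Steps.refl _ hPA
    · have hAB : (A \ B).Nonempty := by
        rw [Finset.sdiff_nonempty]
        intro hsub
        exact hne (Finset.Subset.antisymm hsub hBA)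
      obtain ⟨v, hv⟩ := hAB
      have hvA : v ∈ A := (Finset.mem_sdiff.mp hv).1
      have hvB : v ∉ B := (Finset.mem_sdiff.mp hv).2
      have hsub : B ⊆ A.erase v := fun x hx =>
        Finset.mem_erase.mpr ⟨fun hxv => hvB (hxv ▸ hx), hBA hx⟩
      have hlt : ((A.erase v) \ B).card < n := by
        have : (A.erase v) \ B = (A \ B).erase v := by
          ext x; simp [Finset.mem_erase, Finset.mem_sdiff]; tauto
        rw [this]
        have := Finset.card_erase_of_mem hv
        have hpos : 0 < (A \ B).card := Finset.card_pos.mpr ⟨v, hv⟩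
        omega
      have step : Steps (fun W => IsIndepSet G W ∧ c ≤ W.card + k) (A.erase v) B :=
        ih _ (hn ▸ hlt) (hA.subset (Finset.erase_subset _ _)) hsub rfl
      refine Steps.trans (Steps.single hPA ?_ ?_) step
      · refine ⟨hA.subset (Finset.erase_subset _ _), le_trans hc ?_⟩
        have := Finset.card_le_card hsub; omega
      · rw [symmDiff_erase' hvA]; simp

end Helpers

section Acyclic
open SimpleGraph Walk

variable {V' : Type*} [DecidableEq V'] {H : SimpleGraph V'}

theorem isPath_concat {u v w : V'} {p : H.Walk u v} (hp : p.IsPath) (h : H.Adj v w)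
    (hw : w ∉ p.support) : (p.concat h).IsPath := by
  rw [← SimpleGraph.Walk.isPath_reverse_iff, SimpleGraph.Walk.reverse_concat]
  exact hp.reverse.cons (by simpa [SimpleGraph.Walk.support_reverse] using hw)

/-- In an acyclic graph, adjacent vertices have different distances from any vertex `y`
reachable to them. -/
theorem acyclic_dist_ne (hH : H.IsAcyclic) {x w y : V'} (hadj : H.Adj x w)
    (hreach : H.Reachable y x) : H.dist y w ≠ H.dist y x := by
  intro heq
  have hreachw : H.Reachable y w := hreach.trans hadj.reachable
  rcases Nat.eq_zero_or_pos (H.dist y x) with hd0 | hdpos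
  · have hxy : y = x := hreach.dist_eq_zero_iff.mp hd0
    have hwy : y = w := hreachw.dist_eq_zero_iff.mp (heq.trans hd0)
    exact hadj.ne (hxy ▸ hwy)
  · obtain ⟨q, hq, hqlen⟩ := hreachw.exists_path_of_dist
    by_cases hxs : x ∈ q.support
    · have h1 := congrArg Walk.length (q.take_spec hxs)
      rw [Walk.length_append] at h1
      have h2 : H.dist y x ≤ (q.takeUntil x hxs).length := SimpleGraph.dist_le _
      have h3 : (q.dropUntil x hxs).length ≠ 0 := fun h0 =>
        hadj.ne (Walk.eq_of_length_eq_zero h0)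
      omega
    · obtain ⟨p, hp, hplen⟩ := hreach.exists_path_of_dist
      have hpath : (q.concat hadj.symm).IsPath := isPath_concat hq hadj.symm hxs
      have huniq := hH.path_unique ⟨p, hp⟩ ⟨q.concat hadj.symm, hpath⟩
      have hlen := congrArg (fun r : H.Path y x => r.1.length) huniq
      simp only [Walk.length_concat] at hlen
      omega

/-- In an acyclic graph, a vertex has at most one neighbor closer to the root `y`. -/
theorem acyclic_parent_unique (hH : H.IsAcyclic) {y x w₁ w₂ : V'}
    (h1 : H.Adj x w₁) (h2 : H.Adj x w₂)
    (hd1 : H.dist y w₁ < H.dist y x) (hd2 : H.dist y w₂ < H.dist y x)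
    (hr1 : H.Reachable y w₁) (hr2 : H.Reachable y w₂) : w₁ = w₂ := by
  have mk : ∀ (w : V') (hw : H.Adj x w), H.dist y w < H.dist y x → H.Reachable y w →
      ∃ (q : H.Walk y w), (q.concat hw.symm).IsPath ∧ q.length < H.dist y x := by
    intro w hw hd hr
    obtain ⟨q, hq, hqlen⟩ := hr.exists_path_of_dist
    have hxs : x ∉ q.support := by
      intro hxs
      have h2' : H.dist y x ≤ (q.takeUntil x hxs).length := SimpleGraph.dist_le _
      have h3 := q.length_takeUntil_le hxs
      omega
    exact ⟨q, isPath_concat hq hw.symm hxs, by omega⟩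
  obtain ⟨q₁, hq₁, _⟩ := mk w₁ h1 hd1 hr1
  obtain ⟨q₂, hq₂, _⟩ := mk w₂ h2 hd2 hr2
  have huniq := hH.path_unique ⟨q₁.concat h1.symm, hq₁⟩ ⟨q₂.concat h2.symm, hq₂⟩
  have hwalk : q₁.concat h1.symm = q₂.concat h2.symm := congrArg Subtype.val huniq
  exact (Walk.concat_inj hwalk).1

/-- Every nonempty set of vertices in an acyclic graph contains a vertex with at most
one neighbor inside the set. -/
theorem acyclic_exists_leaf (hH : H.IsAcyclic) (s : Finset V')
    (hs : s.Nonempty) :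
    ∃ x ∈ s, ∀ w₁ ∈ s, ∀ w₂ ∈ s, H.Adj x w₁ → H.Adj x w₂ → w₁ = w₂ := by
  classical
  obtain ⟨y, hy⟩ := hs
  set C := s.filter (fun z => H.Reachable y z) with hC
  have hyC : y ∈ C := by simp [hC, hy, SimpleGraph.Reachable.refl]
  obtain ⟨x, hxC, hmax⟩ := C.exists_max_image (fun z => H.dist y z) ⟨y, hyC⟩
  have hxs : x ∈ s := (Finset.mem_filter.mp hxC).1
  have hxr : H.Reachable y x := (Finset.mem_filter.mp hxC).2
  refine ⟨x, hxs, fun w₁ hw₁ w₂ hw₂ ha₁ ha₂ => ?_⟩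
  have key : ∀ w ∈ s, H.Adj x w → H.dist y w < H.dist y x ∧ H.Reachable y w := by
    intro w hws haw
    have hwr : H.Reachable y w := hxr.trans haw.reachable
    have hwC : w ∈ C := by simp [hC, hws, hwr]
    have hle := hmax w hwC
    have hne := acyclic_dist_ne hH haw hxr
    exact ⟨lt_of_le_of_ne hle hne, hwr⟩
  obtain ⟨hlt₁, hr₁⟩ := key w₁ hw₁ ha₁
  obtain ⟨hlt₂, hr₂⟩ := key w₂ hw₂ ha₂
  exact acyclic_parent_unique hH ha₁ ha₂ hlt₁ hlt₂ hr₁ hr₂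

end Acyclic

section Forest
open Finset

variable {V' : Type*} [DecidableEq V'] {H : SimpleGraph V'}

theorem card_sdiff_eq' {I J : Finset V'} (h : I.card = J.card) :
    (I \ J).card = (J \ I).card := by
  have h1 := Finset.card_sdiff_add_card_inter I J
  have h2 := Finset.card_sdiff_add_card_inter J I
  rw [Finset.inter_comm] at h2
  omega

theorem move_lemma {I J : Finset V'} (hI : IsIndepSet H I) (hJ : IsIndepSet H J)
    (hIJ : (I \ J).Nonempty) {x : V'} (hx : x ∈ J \ I)
    (hleaf : ∀ w₁ ∈ symmDiff I J, ∀ w₂ ∈ symmDiff I J, H.Adj x w₁ → H.Adj x w₂ → w₁ = w₂) :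
    ∃ u ∈ I \ J, IsIndepSet H (insert x (I.erase u)) ∧
      symmDiff (insert x (I.erase u)) J = (symmDiff I J) \ {u, x} := by
  classical
  obtain ⟨hxJ, hxI⟩ := Finset.mem_sdiff.mp hx
  have hxD : x ∈ symmDiff I J := Finset.mem_symmDiff.mpr (Or.inr ⟨hxJ, hxI⟩)
  have hNIJ : ∀ w ∈ I, H.Adj x w → w ∈ I \ J := by
    intro w hw haw
    refine Finset.mem_sdiff.mpr ⟨hw, fun hwJ => hJ x hxJ w hwJ haw⟩
  have key : ∃ u ∈ I \ J, ∀ w ∈ I, H.Adj x w → w = u := by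
    by_cases hN : ∃ w ∈ I, H.Adj x w
    · obtain ⟨u, huI, hua⟩ := hN
      have huIJ := hNIJ u huI hua
      refine ⟨u, huIJ, fun w hw haw => ?_⟩
      have hwIJ := hNIJ w hw haw
      exact hleaf w (Finset.mem_symmDiff.mpr (Or.inl (Finset.mem_sdiff.mp hwIJ)))
        u (Finset.mem_symmDiff.mpr (Or.inl (Finset.mem_sdiff.mp huIJ))) haw hua
    · push_neg at hN
      obtain ⟨u, hu⟩ := hIJ
      exact ⟨u, hu, fun w hw haw => absurd haw (hN w hw)⟩
  obtain ⟨u, huIJ, huniq⟩ := key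
  obtain ⟨huI, huJ⟩ := Finset.mem_sdiff.mp huIJ
  have hxu : x ≠ u := fun h => hxI (h ▸ huI)
  refine ⟨u, huIJ, ?_, ?_⟩
  · intro a ha b hb hab
    rcases Finset.mem_insert.mp ha with rfl | ha'
    · rcases Finset.mem_insert.mp hb with rfl | hb'
      · exact H.irrefl hab
      · have hbI : b ∈ I := Finset.mem_of_mem_erase hb'
        have : b = u := huniq b hbI hab
        exact (Finset.ne_of_mem_erase hb') this
    · rcases Finset.mem_insert.mp hb with rfl | hb'
      · have haI : a ∈ I := Finset.mem_of_mem_erase ha'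
        have : a = u := huniq a haI hab.symm
        exact (Finset.ne_of_mem_erase ha') this
      · exact hI a (Finset.mem_of_mem_erase ha') b (Finset.mem_of_mem_erase hb') hab
  · ext z
    by_cases hzx : z = x
    · subst hzx
      simp [Finset.mem_symmDiff, hxJ, hxI]
    · by_cases hzu : z = u
      · subst hzu
        simp [Finset.mem_symmDiff, huI, huJ, hzx, Ne.symm hxu]
      · simp only [Finset.mem_symmDiff, Finset.mem_insert, Finset.mem_erase,
          Finset.mem_sdiff, Finset.mem_singleton, hzx, hzu, false_or,
          Finset.mem_insert, not_or]
        tauto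

theorem forest_steps (hH : H.IsAcyclic) :
    ∀ (n : ℕ) (I J : Finset V'), (symmDiff I J).card = n → IsIndepSet H I →
      IsIndepSet H J → I.card = J.card →
      Steps (fun W => IsIndepSet H W ∧ I.card ≤ W.card + 1) I J := by
  intro n
  induction n using Nat.strong_induction_on with
  | _ n ih =>
    intro I J hn hI hJ hcard
    rcases eq_or_ne I J with rfl | hne
    · exact Steps.refl _ ⟨hI, by omega⟩
    have hD : (symmDiff I J).Nonempty := by
      rw [Finset.nonempty_iff_ne_empty]
      intro h
      exact hne (symmDiff_eq_bot.mp h)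
    obtain ⟨x, hxD, hleaf⟩ := acyclic_exists_leaf hH _ hD
    have hsd := card_sdiff_eq' hcard
    have hmeasure : ∀ u x' : V', u ∈ symmDiff I J → x' ∈ symmDiff I J → u ≠ x' →
        ((symmDiff I J) \ {u, x'}).card < n := by
      intro u x' hu hx' hux
      have hsub : ({u, x'} : Finset V') ⊆ symmDiff I J := by
        intro z hz
        rcases Finset.mem_insert.mp hz with rfl | hz
        · exact hu
        · exact (Finset.mem_singleton.mp hz) ▸ hx'
      have := Finset.card_lt_card (Finset.sdiff_ssubset hsub ⟨u, Finset.mem_insert_self _ _⟩)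
      omega
    rw [Finset.mem_symmDiff] at hxD
    rcases hxD with ⟨hxI, hxJ⟩ | ⟨hxJ, hxI⟩
    · -- x ∈ I \ J : move on the J side
      have hJI : (J \ I).Nonempty := by
        have hx : x ∈ I \ J := Finset.mem_sdiff.mpr ⟨hxI, hxJ⟩
        have hpos : 0 < (I \ J).card := Finset.card_pos.mpr ⟨x, hx⟩
        exact Finset.card_pos.mp (hsd ▸ hpos)
      have hleaf' : ∀ w₁ ∈ symmDiff J I, ∀ w₂ ∈ symmDiff J I,
          H.Adj x w₁ → H.Adj x w₂ → w₁ = w₂ := by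
        rw [symmDiff_comm]; exact hleaf
      obtain ⟨u, huJI, hind, hsymm⟩ :=
        move_lemma hJ hI hJI (Finset.mem_sdiff.mpr ⟨hxI, hxJ⟩) hleaf'
      obtain ⟨huJ, huI⟩ := Finset.mem_sdiff.mp huJI
      set J₂ := insert x (J.erase u) with hJ₂
      have hxJe : x ∉ J.erase u := fun h => hxJ (Finset.mem_of_mem_erase h)
      have hJpos : 0 < J.card := Finset.card_pos.mpr ⟨u, huJ⟩
      have hJ₂card : J₂.card = J.card := by
        rw [hJ₂, Finset.card_insert_of_notMem hxJe, Finset.card_erase_of_mem huJ]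
        omega
      have hux : u ≠ x := fun h => hxJ (h ▸ huJ)
      have hmlt : (symmDiff I J₂).card < n := by
        rw [symmDiff_comm, hsymm, symmDiff_comm J I]
        exact hn ▸ hmeasure u x (Finset.mem_symmDiff.mpr (Or.inr ⟨huJ, huI⟩))
          (Finset.mem_symmDiff.mpr (Or.inl ⟨hxI, hxJ⟩)) hux
      have hrec := ih _ hmlt I J₂ rfl hI hind (hcard.trans hJ₂card.symm)
      refine Steps.trans hrec (Steps.trans (Steps.single (B := J.erase u) ?_ ?_ ?_) (Steps.single ?_ ?_ ?_))
      · exact ⟨hind, by omega⟩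
      · exact ⟨hJ.subset (Finset.erase_subset _ _),
          by rw [Finset.card_erase_of_mem huJ]; omega⟩
      · have : symmDiff J₂ (J.erase u) = {x} := by
          rw [symmDiff_comm, hJ₂, symmDiff_insert' hxJe]
        rw [this]; simp
      · exact ⟨hJ.subset (Finset.erase_subset _ _),
          by rw [Finset.card_erase_of_mem huJ]; omega⟩
      · exact ⟨hJ, by omega⟩
      · have : symmDiff (J.erase u) J = {u} := by
          rw [symmDiff_comm, symmDiff_erase' huJ]
        rw [this]; simp
    · -- x ∈ J \ I : move on the I side
      have hIJ : (I \ J).Nonempty := by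
        have hx : x ∈ J \ I := Finset.mem_sdiff.mpr ⟨hxJ, hxI⟩
        have hpos : 0 < (J \ I).card := Finset.card_pos.mpr ⟨x, hx⟩
        exact Finset.card_pos.mp (by omega)
      obtain ⟨u, huIJ, hind, hsymm⟩ :=
        move_lemma hI hJ hIJ (Finset.mem_sdiff.mpr ⟨hxJ, hxI⟩) hleaf
      obtain ⟨huI, huJ⟩ := Finset.mem_sdiff.mp huIJ
      set I₂ := insert x (I.erase u) with hI₂
      have hxIe : x ∉ I.erase u := fun h => hxI (Finset.mem_of_mem_erase h)
      have hIpos : 0 < I.card := Finset.card_pos.mpr ⟨u, huI⟩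
      have hI₂card : I₂.card = I.card := by
        rw [hI₂, Finset.card_insert_of_notMem hxIe, Finset.card_erase_of_mem huI]
        omega
      have hux : u ≠ x := fun h => hxI (h ▸ huI)
      have hmlt : (symmDiff I₂ J).card < n := by
        rw [hsymm]
        exact hn ▸ hmeasure u x (Finset.mem_symmDiff.mpr (Or.inl ⟨huI, huJ⟩))
          (Finset.mem_symmDiff.mpr (Or.inr ⟨hxJ, hxI⟩)) hux
      have hrec := ih _ hmlt I₂ J rfl hind hJ (hI₂card.trans hcard)
      rw [hI₂card] at hrec
      refine Steps.trans (Steps.trans (Steps.single (B := I.erase u) ?_ ?_ ?_) (Steps.single ?_ ?_ ?_)) hrec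
      · exact ⟨hI, by omega⟩
      · exact ⟨hI.subset (Finset.erase_subset _ _),
          by rw [Finset.card_erase_of_mem huI]; omega⟩
      · rw [symmDiff_erase' huI]; simp
      · exact ⟨hI.subset (Finset.erase_subset _ _),
          by rw [Finset.card_erase_of_mem huI]; omega⟩
      · exact ⟨hind, by omega⟩
      · rw [symmDiff_insert' hxIe]; simp

end Forest

section Transfer
open Finset

theorem Steps.image_steps {α β : Type*} [DecidableEq α] [DecidableEq β] {f : α → β}
    (hf : Function.Injective f) {P : Finset α → Prop} {Q : Finset β → Prop}
    (hPQ : ∀ A, P A → Q (A.image f)) {A B : Finset α} (h : Steps P A B) :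
    Steps Q (A.image f) (B.image f) := by
  induction h with
  | refl h => exact Steps.refl _ (hPQ _ h)
  | @tail B' C' hAB hC hc ih =>
      refine Steps.tail ih (hPQ _ hC) ?_
      rw [← Finset.image_symmDiff _ _ hf, Finset.card_image_of_injective _ hf]
      exact hc

theorem forest_steps_G {V : Type*} [DecidableEq V] {G : SimpleGraph V}
    {S : Finset V} (hS : IsFVS G S) {A B : Finset V} (hA : IsIndepSet G A)
    (hB : IsIndepSet G B) (hAS : ∀ a ∈ A, a ∉ S) (hBS : ∀ b ∈ B, b ∉ S)
    (hcard : A.card = B.card) :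
    Steps (fun W => IsIndepSet G W ∧ A.card ≤ W.card + 1) A B := by
  classical
  set s : Set V := {v : V | v ∉ S} with hs
  set H := G.induce s with hH
  have hadj : ∀ u v : s, H.Adj u v ↔ G.Adj u.1 v.1 := fun u v => Iff.rfl
  set p : V → Prop := fun v => v ∈ s with hp
  have hlift : ∀ (C : Finset V), (∀ c ∈ C, c ∉ S) → IsIndepSet G C →
      ∃ C' : Finset s, C'.image Subtype.val = C ∧ C'.card = C.card ∧ IsIndepSet H C' := by
    intro C hCS hCind
    have h1 : (C.subtype p).image Subtype.val = C := by
      ext x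
      simp only [Finset.mem_image]
      constructor
      · rintro ⟨a, ha, rfl⟩
        exact Finset.mem_subtype.mp ha
      · intro hx
        exact ⟨⟨x, hCS x hx⟩, Finset.mem_subtype.mpr hx, rfl⟩
    refine ⟨C.subtype p, h1, ?_, ?_⟩
    · conv_rhs => rw [← h1]
      rw [Finset.card_image_of_injective _ Subtype.val_injective]
    · intro u hu v hv huv
      rw [Finset.mem_subtype] at hu hv
      exact hCind u.1 hu v.1 hv ((hadj u v).mp huv)
  obtain ⟨A', hA'im, hA'card, hA'ind⟩ := hlift A hAS hA
  obtain ⟨B', hB'im, hB'card, hB'ind⟩ := hlift B hBS hB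
  have hforest := forest_steps (H := H) hS _ A' B' rfl hA'ind hB'ind
    (by rw [hA'card, hB'card, hcard])
  have hmap := Steps.image_steps (f := (Subtype.val : s → V)) Subtype.val_injective
    (Q := fun W => IsIndepSet G W ∧ A.card ≤ W.card + 1) ?_ hforest
  · rwa [hA'im, hB'im] at hmap
  · rintro C ⟨hCind, hCcard⟩
    constructor
    · intro u hu v hv huv
      obtain ⟨u', hu', rfl⟩ := Finset.mem_image.mp hu
      obtain ⟨v', hv', rfl⟩ := Finset.mem_image.mp hv
      exact hCind u' hu' v' hv' ((hadj u' v').mpr huv)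
    · rw [Finset.card_image_of_injective _ Subtype.val_injective]
      omega

end Transfer

section Main
open Finset

theorem aux_steps {V : Type*} [DecidableEq V] {G : SimpleGraph V} {S : Finset V}
    (hS : IsFVS G S) {I J : Finset V} (hI : IsIndepSet G I) (hJ : IsIndepSet G J)
    (hcard : I.card = J.card) (hle : (I \ S).card ≤ (J \ S).card) :
    Steps (fun W => IsIndepSet G W ∧ I.card ≤ W.card + (S.card + 1)) I J := by
  classical
  have hIsplit := Finset.card_sdiff_add_card_inter I S
  have hISle : (I ∩ S).card ≤ S.card := Finset.card_le_card Finset.inter_subset_right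
  obtain ⟨J'', hJ''sub, hJ''card⟩ := Finset.exists_subset_card_eq hle
  have c1 : Steps (fun W => IsIndepSet G W ∧ I.card ≤ W.card + (S.card + 1)) I (I \ S) :=
    steps_erase hI Finset.sdiff_subset (by omega)
  have c2 := forest_steps_G hS (hI.subset Finset.sdiff_subset)
      (hJ.subset (hJ''sub.trans Finset.sdiff_subset))
      (fun a ha => (Finset.mem_sdiff.mp ha).2)
      (fun b hb => (Finset.mem_sdiff.mp (hJ''sub hb)).2) hJ''card.symm
  have c2' := c2.mono (Q := fun W => IsIndepSet G W ∧ I.card ≤ W.card + (S.card + 1))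
      (fun A hA => ⟨hA.1, by have := hA.2; omega⟩)
  have c3 : Steps (fun W => IsIndepSet G W ∧ I.card ≤ W.card + (S.card + 1)) J J'' :=
    steps_erase hJ (hJ''sub.trans Finset.sdiff_subset) (by omega)
  exact (c1.trans c2').trans c3.symm

end Main

/-- the TAR reconfiguration threshold of any graph `G` is at most
`fvs(G) + 1`: any two equal-size independent sets can be `(fvs(G)+1)`-TAR reconfigured. -/
theorem tar_le_fvs_add_one {V : Type*} [Fintype V] [DecidableEq V] (G : SimpleGraph V)
    (I J : Finset V) (hI : IsIndepSet G I) (hJ : IsIndepSet G J)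
    (hcard : I.card = J.card) :
    TARReconf G (fvsNum V G + 1) I J := by
  classical
  have hmem : fvsNum V G ∈ {n | ∃ S : Finset V, IsFVS G S ∧ S.card = n} := by
    apply Nat.sInf_mem
    refine ⟨(Finset.univ : Finset V).card, Finset.univ, ?_, rfl⟩
    intro v c hc
    exact absurd (Finset.mem_univ v.1) v.2
  obtain ⟨S, hS, hScard⟩ := hmem
  have key : Steps (fun W => IsIndepSet G W ∧ I.card ≤ W.card + (S.card + 1)) I J := by
    rcases le_or_gt (I \ S).card ((J \ S).card) with hle | hlt
    · exact aux_steps hS hI hJ hcard hle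
    · have h := aux_steps hS hJ hI hcard.symm (le_of_lt hlt)
      rw [← hcard] at h
      exact h.symm
  rw [hScard] at key
  obtain ⟨n, W, h0, hn, hP, hstep⟩ := key.exists_seq
  exact ⟨n, W, h0, hn, hP, hstep⟩
end

section
/- For the complete bipartite graph K_{n,n} with partite sets I and J, any TAR reconfiguration sequence from I to J must pass through the empty independent set; hence the TAR reconfiguration threshold of K_{n,n} equals n. -/
/-!
An independent set of `K_{n,n}` lies on one side. Along a reconfiguration from the left side to
the right side, look at the first set meeting the right side: it avoids the left side, so it is
disjoint from its predecessor, which has no right vertex; as the two differ in a single vertex,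
the predecessor is empty. The buffer there is `n`, and `n` is attained by deleting the left
vertices one at a time and then inserting the right ones.
-/

open Finset

section CompleteBipartite

variable {α β : Type*}

lemma IsIndepSet.inl_notMem_of_inr_mem {S : Finset (α ⊕ β)}
    (hS : IsIndepSet (completeBipartiteGraph α β) S) {a : α} {b : β} (hb : Sum.inr b ∈ S) :
    Sum.inl a ∉ S :=
  fun ha => hS _ ha _ hb (by simp)

lemma eq_empty_of_card_symmDiff_le_one_of_inr_mem [DecidableEq α] [DecidableEq β] {S T : Finset (α ⊕ β)}
    (hS : ∀ b, Sum.inr b ∉ S) (hT : IsIndepSet (completeBipartiteGraph α β) T) {b : β}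
    (hb : Sum.inr b ∈ T) (hST : #(symmDiff S T) ≤ 1) : S = ∅ := by
  have hdisj : Disjoint S T := by
    rw [disjoint_left]
    rintro (a | b') haS haT
    · exact hT.inl_notMem_of_inr_mem hb haT
    · exact hS b' haS
  rw [hdisj.symmDiff_eq_sup, sup_eq_union, card_union_of_disjoint hdisj] at hST
  have hTpos : 0 < #T := card_pos.mpr ⟨_, hb⟩
  exact card_eq_zero.mp (by omega)

lemma exists_eq_empty_of_inr_mem [DecidableEq α] [DecidableEq β] (W : ℕ → Finset (α ⊕ β))
    (h0 : ∀ b, Sum.inr b ∉ W 0) (m : ℕ)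
    (hind : ∀ i ≤ m, IsIndepSet (completeBipartiteGraph α β) (W i))
    (hstep : ∀ i < m, #(symmDiff (W i) (W (i + 1))) ≤ 1) {b : β} (hb : Sum.inr b ∈ W m) :
    ∃ i < m, W i = ∅ := by
  induction m generalizing b with
  | zero => exact absurd hb (h0 b)
  | succ m ih =>
    by_cases hm : ∃ b', Sum.inr b' ∈ W m
    · obtain ⟨b', hb'⟩ := hm
      obtain ⟨i, him, hi⟩ :=
        ih (fun i hi => hind i (by omega)) (fun i hi => hstep i (by omega)) hb'
      exact ⟨i, by omega, hi⟩
    · push Not at hm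
      exact ⟨m, by omega, eq_empty_of_card_symmDiff_le_one_of_inr_mem hm (hind _ le_rfl) hb
        (hstep m (by omega))⟩

lemma exists_eq_empty_of_reconf_left_to_right [DecidableEq α] [DecidableEq β]
    (W : ℕ → Finset (α ⊕ β)) (m : ℕ) (h0 : ∀ b, Sum.inr b ∉ W 0)
    (hm : ∀ a, Sum.inl a ∉ W m)
    (hind : ∀ i ≤ m, IsIndepSet (completeBipartiteGraph α β) (W i))
    (hstep : ∀ i < m, #(symmDiff (W i) (W (i + 1))) ≤ 1) :
    ∃ i ≤ m, W i = ∅ := by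
  obtain hWm | ⟨a | b, hx⟩ := (W m).eq_empty_or_nonempty
  · exact ⟨m, le_rfl, hWm⟩
  · exact absurd hx (hm a)
  · obtain ⟨i, him, hi⟩ := exists_eq_empty_of_inr_mem W h0 m hind hstep hx
    exact ⟨i, him.le, hi⟩

end CompleteBipartite

section Sweep

variable (n : ℕ)

/-- Vertex `inl a` leaves the set at step `a`, vertex `inr b` enters it at step `n + b`. -/
def sweepTime : Fin n ⊕ Fin n → ℕ :=
  Sum.elim (fun a => a) (fun b => n + b)

def sweep (i : ℕ) : Finset (Fin n ⊕ Fin n) :=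
  (univ.filter fun a : Fin n => i ≤ a).disjSum (univ.filter fun b : Fin n => n + b < i)

lemma sweepTime_injective : Function.Injective (sweepTime n) := by
  rintro (a | a) (b | b) h <;> simp [sweepTime, Fin.ext_iff] at h ⊢ <;> omega

lemma sweepTime_eq_of_mem_symmDiff {i : ℕ} {x : Fin n ⊕ Fin n}
    (hx : x ∈ symmDiff (sweep n i) (sweep n (i + 1))) : sweepTime n x = i := by
  cases x <;> simp [sweep, sweepTime, mem_symmDiff] at hx ⊢ <;> omega

lemma card_symmDiff_sweep_le_one (i : ℕ) : #(symmDiff (sweep n i) (sweep n (i + 1))) ≤ 1 :=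
  card_le_one.mpr fun _ hx _ hy => sweepTime_injective n
    ((sweepTime_eq_of_mem_symmDiff n hx).trans (sweepTime_eq_of_mem_symmDiff n hy).symm)

lemma isIndepSet_sweep (i : ℕ) :
    IsIndepSet (completeBipartiteGraph (Fin n) (Fin n)) (sweep n i) := by
  rintro (a | a) ha (b | b) hb <;> simp [sweep] at ha hb ⊢ <;> omega

lemma sweep_zero : sweep n 0 = univ.image Sum.inl := by
  ext (a | a) <;> simp [sweep]

lemma sweep_two_mul : sweep n (2 * n) = univ.image Sum.inr := by
  ext (a | a) <;> simp [sweep] <;> omega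

end Sweep

/-- in `K_{n,n}`, every TAR reconfiguration sequence from one partite
set `I` to the other partite set `J` passes through the empty set; consequently the TAR
reconfiguration threshold of `K_{n,n}` equals `n`. -/
theorem tar_completeBipartite (n : ℕ)
    (I : Finset (Fin n ⊕ Fin n)) (J : Finset (Fin n ⊕ Fin n))
    (hI : I = Finset.univ.image Sum.inl) (hJ : J = Finset.univ.image Sum.inr) :
    (∀ (m : ℕ) (W : ℕ → Finset (Fin n ⊕ Fin n)), W 0 = I → W m = J →
      (∀ i ≤ m, IsIndepSet (completeBipartiteGraph (Fin n) (Fin n)) (W i)) →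
      (∀ i < m, (symmDiff (W i) (W (i + 1))).card ≤ 1) →
      ∃ i ≤ m, W i = ∅) ∧
    TARReconf (completeBipartiteGraph (Fin n) (Fin n)) n I J ∧
    (∀ k : ℕ, TARReconf (completeBipartiteGraph (Fin n) (Fin n)) k I J → n ≤ k) := by
  subst hI hJ
  have passes_empty : ∀ (m : ℕ) (W : ℕ → Finset (Fin n ⊕ Fin n)),
      W 0 = univ.image Sum.inl → W m = univ.image Sum.inr →
      (∀ i ≤ m, IsIndepSet (completeBipartiteGraph (Fin n) (Fin n)) (W i)) →
      (∀ i < m, #(symmDiff (W i) (W (i + 1))) ≤ 1) → ∃ i ≤ m, W i = ∅ :=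
    fun m W h0 hm => exists_eq_empty_of_reconf_left_to_right W m (by simp [h0]) (by simp [hm])
  have hcard : #(univ.image (Sum.inl : Fin n → Fin n ⊕ Fin n)) = n := by
    simp [card_image_of_injective _ Sum.inl_injective]
  refine ⟨passes_empty, ⟨2 * n, sweep n, sweep_zero n, sweep_two_mul n,
    fun i _ => ⟨isIndepSet_sweep n i, by omega⟩,
    fun i _ => card_symmDiff_sweep_le_one n i⟩, ?_⟩
  rintro k ⟨m, W, h0, hm, hW, hstep⟩
  obtain ⟨i, him, hi⟩ := passes_empty m W h0 hm (fun i hi => (hW i hi).1) hstep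
  simpa [hi, hcard] using (hW i him).2
end

section
/- Let G = (I ∪ J, E) be a bipartite graph admitting a path decomposition of width k, and let S ⊆ J be a nonempty set that is inclusion-wise minimal with the property |N(S)| ≤ |S|. Order S as i_1, ..., i_t by increasing index of the last bag containing each vertex (in a nice path decomposition). Then for every 1 ≤ t' ≤ t, |N({i_1, ..., i_{t'}})| < t' + k. -/
/-- let `G` be bipartite with a nice path decomposition `X 0, …, X r` of
width `k`, let `S ⊆ J` be nonempty and inclusion-wise minimal with `|N(S)| ≤ |S|`, and
order `S` as `σ 0, σ 1, …` by increasing index `R` of the last bag containing each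
vertex. Then every nonempty prefix `{σ 0, …, σ (t'-1)}` satisfies
`|N(prefix)| < t' + k`. -/
theorem prefix_neighborhood_bound {V : Type*} [Fintype V] [DecidableEq V]
    (G : SimpleGraph V) [DecidableRel G.Adj] (I J : Finset V)
    (hpart : I ∪ J = Finset.univ) (hdisj : Disjoint I J)
    (hIind : IsIndepSet G I) (hJind : IsIndepSet G J)
    (k r : ℕ) (X : ℕ → Finset V)
    (hcover : ∀ v : V, ∃ i ≤ r, v ∈ X i)
    (hedge : ∀ u v : V, G.Adj u v → ∃ i ≤ r, u ∈ X i ∧ v ∈ X i)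
    (hinterval : ∀ (v : V) (i j l : ℕ), i ≤ j → j ≤ l → l ≤ r →
      v ∈ X i → v ∈ X l → v ∈ X j)
    (hwidth : ∀ i ≤ r, (X i).card ≤ k + 1)
    (hnice0 : X 0 = ∅) (hnicer : X r = ∅)
    (hnice : ∀ i < r, (∃ v ∉ X i, X (i + 1) = insert v (X i)) ∨
      (∃ v ∈ X i, X (i + 1) = X i \ {v}))
    (R : V → ℕ)
    (hR : ∀ v : V, R v ≤ r ∧ v ∈ X (R v) ∧ ∀ i ≤ r, v ∈ X i → i ≤ R v)
    (S : Finset V) (hSJ : S ⊆ J) (hSne : S.Nonempty)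
    (hS : (nbhd G S).card ≤ S.card)
    (hmin : ∀ S' ⊆ S, S'.Nonempty → S' ≠ S → ¬ ((nbhd G S').card ≤ S'.card))
    (t : ℕ) (σ : Fin t → V) (hσinj : Function.Injective σ)
    (hσim : Finset.univ.image σ = S)
    (hσmono : StrictMono fun i : Fin t => R (σ i)) :
    ∀ t' : ℕ, 1 ≤ t' → t' ≤ t →
      (nbhd G ((Finset.univ.filter fun i : Fin t => (i : ℕ) < t').image σ)).card
        < t' + k := by
  
  intro t' ht'1 ht't
  set T : Finset V := (Finset.univ.filter fun i : Fin t => (i : ℕ) < t').image σ with hTdef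
  have hmemN : ∀ (A : Finset V) (w : V), w ∈ nbhd G A ↔ ((∃ a ∈ A, G.Adj a w) ∧ w ∉ A) := by
    intro A w
    simp [nbhd, SimpleGraph.mem_neighborFinset]
  have hnotS : ∀ (A : Finset V), A ⊆ S → ∀ w ∈ nbhd G A, (w ∉ S ∧ ∃ a ∈ A, G.Adj a w) := by
    intro A hA w hw
    rw [hmemN] at hw
    obtain ⟨⟨a, ha, hadj⟩, hwA⟩ := hw
    refine ⟨fun hwS => ?_, a, ha, hadj⟩
    exact hJind a (hSJ (hA ha)) w (hSJ hwS) hadj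
  have hsubN : ∀ (A : Finset V), A ⊆ S → nbhd G A ⊆ nbhd G S := by
    intro A hA w hw
    obtain ⟨hwS, a, ha, hadj⟩ := hnotS A hA w hw
    rw [hmemN]
    exact ⟨⟨a, hA ha, hadj⟩, hwS⟩
  have hTS : T ⊆ S := by
    intro v hv
    rw [hTdef] at hv
    obtain ⟨i, -, rfl⟩ := Finset.mem_image.mp hv
    rw [← hσim]
    exact Finset.mem_image_of_mem σ (Finset.mem_univ i)
  -- case k = 0 : no edges at all
  rcases Nat.eq_zero_or_pos k with hk0 | hk1
  · subst hk0
    have hempty : nbhd G T = ∅ := by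
      ext w
      simp only [Finset.notMem_empty, iff_false]
      intro hw
      rw [hmemN] at hw
      obtain ⟨⟨a, ha, hadj⟩, -⟩ := hw
      obtain ⟨i, hir, hai, hwi⟩ := hedge a w hadj
      have h2 : ({a, w} : Finset V) ⊆ X i := by
        intro x hx
        simp only [Finset.mem_insert, Finset.mem_singleton] at hx
        rcases hx with rfl | rfl <;> assumption
      have h3 := Finset.card_le_card h2
      rw [Finset.card_pair (G.ne_of_adj hadj)] at h3
      have h4 := hwidth i hir
      omega
    rw [hempty]
    rw [Finset.card_empty]; omega
  -- main setting
  have ht'pred : t' - 1 < t := by omega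
  set σ₀ : V := σ ⟨t' - 1, ht'pred⟩ with hσ₀def
  set m : ℕ := R σ₀ with hmdef
  have hmr : m ≤ r := (hR σ₀).1
  have hσ₀m : σ₀ ∈ X m := (hR σ₀).2.1
  have hσ₀T : σ₀ ∈ T := by
    rw [hTdef]
    refine Finset.mem_image_of_mem σ (Finset.mem_filter.mpr ⟨Finset.mem_univ _, ?_⟩)
    simp only []
    omega
  have hσ₀S : σ₀ ∈ S := hTS hσ₀T
  have hcardS : S.card = t := by
    rw [← hσim, Finset.card_image_of_injective _ hσinj, Finset.card_univ, Fintype.card_fin]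
  have hcardT : T.card = t' := by
    have hfe : (Finset.univ.filter fun i : Fin t => (i : ℕ) < t')
        = Finset.image (Fin.castLE ht't) Finset.univ := by
      ext j
      simp only [Finset.mem_filter, Finset.mem_univ, true_and, Finset.mem_image]
      constructor
      · intro h
        refine ⟨⟨(j : ℕ), h⟩, ?_⟩
        first
        | (refine ⟨Finset.mem_univ _, ?_⟩; apply Fin.ext; rfl)
        | (apply Fin.ext; rfl)
      · rintro ⟨i, -, rfl⟩
        simpa using i.isLt
    have hcle : Function.Injective (Fin.castLE ht't) := fun a b hab =>
      Fin.ext (by simpa using congrArg Fin.val hab)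
    rw [hTdef, hfe, Finset.card_image_of_injective _ hσinj,
      Finset.card_image_of_injective _ hcle, Finset.card_univ, Fintype.card_fin]
  have hRleq : ∀ i : Fin t, (i : ℕ) < t' → R (σ i) ≤ m := by
    intro i hi
    rw [hmdef, hσ₀def]
    exact hσmono.monotone (show i ≤ ⟨t' - 1, ht'pred⟩ from by
      rw [Fin.le_def]; simp; omega)
  have hRgt : ∀ v ∈ S \ T, m < R v := by
    intro v hv
    obtain ⟨hvS, hvT⟩ := Finset.mem_sdiff.mp hv
    rw [← hσim] at hvS
    obtain ⟨j, -, rfl⟩ := Finset.mem_image.mp hvS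
    have hj : ¬ ((j : ℕ) < t') := by
      intro h
      exact hvT (by
        rw [hTdef]
        exact Finset.mem_image_of_mem σ (Finset.mem_filter.mpr ⟨Finset.mem_univ _, h⟩))
    rw [hmdef, hσ₀def]
    exact hσmono (show (⟨t' - 1, ht'pred⟩ : Fin t) < j from by
      rw [Fin.lt_def]; simp; omega)
  have hleft : ∀ w ∈ nbhd G T, ∃ a, a ≤ m ∧ w ∈ X a := by
    intro w hw
    obtain ⟨⟨a, haT, hadj⟩, -⟩ := (hmemN T w).mp hw
    rw [hTdef] at haT
    obtain ⟨i, hi, rfl⟩ := Finset.mem_image.mp haT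
    have hi' : (i : ℕ) < t' := (Finset.mem_filter.mp hi).2
    obtain ⟨b, hbr, hab, hwb⟩ := hedge _ w hadj
    refine ⟨b, ?_, hwb⟩
    have h1 : b ≤ R (σ i) := (hR (σ i)).2.2 b hbr hab
    have h2 := hRleq i hi'
    omega
  have hRw : ∀ w ∈ nbhd G T, w ∉ X m → R w < m := by
    intro w hw hwm
    obtain ⟨a, ham, hwa⟩ := hleft w hw
    by_contra hcon
    push_neg at hcon
    exact hwm (hinterval w a m (R w) ham hcon (hR w).1 hwa (hR w).2.1)
  set Suf : Finset V := S \ T with hSufdef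
  set C : Finset V := Suf.filter (fun v => v ∈ X m) with hCdef
  set W : Finset V := Suf.filter (fun v => v ∉ X m) with hWdef
  set Q : Finset V := (nbhd G T) ∩ X m with hQdef
  set D : Finset V := nbhd G S \ nbhd G T with hDdef
  have hCS : C ⊆ S := (Finset.filter_subset _ _).trans (Finset.sdiff_subset)
  have hCXm : C ⊆ X m := fun x hx => (Finset.mem_filter.mp hx).2
  have hσ₀C : σ₀ ∉ C := by
    intro h
    exact (Finset.mem_sdiff.mp ((Finset.filter_subset _ _) h)).2 hσ₀T
  have hQXm : Q ⊆ X m := Finset.inter_subset_right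
  have hQnotS : ∀ w ∈ Q, w ∉ S := fun w hw =>
    (hnotS T hTS w (Finset.mem_inter.mp hw).1).1
  have hdisjCQ : Disjoint C Q := by
    rw [Finset.disjoint_left]
    intro x hxC hxQ
    exact hQnotS x hxQ (hCS hxC)
  have hσ₀CQ : σ₀ ∉ C ∪ Q := by
    intro h
    rcases Finset.mem_union.mp h with h | h
    · exact hσ₀C h
    · exact hQnotS σ₀ h hσ₀S
  have h16 : C.card + Q.card + 1 ≤ k + 1 := by
    have hins : insert σ₀ (C ∪ Q) ⊆ X m := by
      rw [Finset.insert_subset_iff]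
      exact ⟨hσ₀m, Finset.union_subset hCXm hQXm⟩
    have h1 := Finset.card_le_card hins
    rw [Finset.card_insert_of_notMem hσ₀CQ, Finset.card_union_of_disjoint hdisjCQ] at h1
    have h2 := hwidth m hmr
    omega
  have hDcard : D.card + (nbhd G T).card = (nbhd G S).card :=
    Finset.card_sdiff_add_card_eq_card (hsubN T hTS)
  have hNSt : (nbhd G S).card ≤ t := by rw [← hcardS]; exact hS
  have hCW : C.card + W.card = Suf.card := by
    rw [hCdef, hWdef]
    exact Finset.card_filter_add_card_filter_not (p := fun v => v ∈ X m)
  have hSufcard : Suf.card + T.card = S.card :=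
    Finset.card_sdiff_add_card_eq_card hTS
  by_cases hWne : W.Nonempty
  · -- main case : W nonempty, use minimality on W
    have hWS : W ⊆ S := (Finset.filter_subset _ _).trans (Finset.sdiff_subset)
    have hWneS : W ≠ S := by
      intro h
      have hσ₀W : σ₀ ∈ W := h ▸ hσ₀S
      exact (Finset.mem_sdiff.mp ((Finset.filter_subset _ _) hσ₀W)).2 hσ₀T
    have hminW := hmin W hWS hWne hWneS
    have hminW' : W.card < (nbhd G W).card := Nat.lt_of_not_le (fun h => hminW (by omega))
    have hNWQD : nbhd G W ⊆ Q ∪ D := by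
      intro w hw
      obtain ⟨hwS, v, hv, hadj⟩ := hnotS W hWS w hw
      have hwNS : w ∈ nbhd G S := hsubN W hWS hw
      by_cases hwT : w ∈ nbhd G T
      · obtain ⟨a, ham, hwa⟩ := hleft w hwT
        obtain ⟨θ, hθr, hvθ, hwθ⟩ := hedge v w hadj
        have hvXm : v ∉ X m := (Finset.mem_filter.mp hv).2
        have hRv : m < R v := hRgt v ((Finset.filter_subset _ _) hv)
        have hmθ : m < θ := by
          by_contra hcontra
          push_neg at hcontra
          exact hvXm (hinterval v θ m (R v) hcontra (le_of_lt hRv) (hR v).1 hvθ (hR v).2.1)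
        have hwm : w ∈ X m := hinterval w a m θ ham (le_of_lt hmθ) hθr hwa hwθ
        exact Finset.mem_union_left _ (Finset.mem_inter.mpr ⟨hwT, hwm⟩)
      · exact Finset.mem_union_right _ (Finset.mem_sdiff.mpr ⟨hwNS, hwT⟩)
    have hNW_le : (nbhd G W).card ≤ Q.card + D.card :=
      (Finset.card_le_card hNWQD).trans (Finset.card_union_le _ _)
    omega
  · -- W empty
    have hWempty : W.card = 0 := by
      rw [Finset.card_eq_zero]
      exact Finset.not_nonempty_iff_eq_empty.mp hWne
    by_contra hcon
    push_neg at hcon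
    have hNT_le : (nbhd G T).card ≤ (nbhd G S).card := Finset.card_le_card (hsubN T hTS)
    have hCk : C.card = k := by omega
    have hNTS : nbhd G T = nbhd G S :=
      Finset.eq_of_subset_of_card_le (hsubN T hTS) (by omega)
    set B : Finset V := insert σ₀ C with hBdef
    have hBcard : B.card = k + 1 := by
      rw [hBdef, Finset.card_insert_of_notMem hσ₀C, hCk]
    have hBsubXm : B ⊆ X m := by
      rw [hBdef, Finset.insert_subset_iff]
      exact ⟨hσ₀m, hCXm⟩
    have hXmB : B = X m :=
      Finset.eq_of_subset_of_card_le hBsubXm (by rw [hBcard]; exact hwidth m hmr)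
    have hBS : B ⊆ S := by
      rw [hBdef, Finset.insert_subset_iff]
      exact ⟨hσ₀S, hCS⟩
    have hXmS : ∀ z ∈ X m, z ∈ S := by
      intro z hz
      rw [← hXmB] at hz
      exact hBS hz
    have hexX : ∀ y : V, ∃ i, y ∈ X i := by
      intro y
      obtain ⟨i, -, h⟩ := hcover y
      exact ⟨i, h⟩
    obtain ⟨y, hyB, hymax⟩ := Finset.exists_max_image B (fun z => Nat.find (hexX z))
      ⟨σ₀, Finset.mem_insert_self _ _⟩
    have hblock : ∀ i, Nat.find (hexX y) ≤ i → i ≤ m → X i = B := by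
      intro i h1 h2
      have hsub : B ⊆ X i := by
        intro z hz
        have hLz : Nat.find (hexX z) ≤ i := le_trans (hymax z hz) h1
        have hzm : z ∈ X m := hXmB ▸ hz
        exact hinterval z (Nat.find (hexX z)) i m hLz h2 hmr (Nat.find_spec (hexX z)) hzm
      exact (Finset.eq_of_subset_of_card_le hsub
        (by rw [hBcard]; exact hwidth i (h2.trans hmr))).symm
    have ht2 : 2 ≤ t := by omega
    have hyS : y ∈ S := hBS hyB
    have hySsub : ({y} : Finset V) ⊆ S := Finset.singleton_subset_iff.mpr hyS
    have hyneS : ({y} : Finset V) ≠ S := by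
      intro h
      have := congrArg Finset.card h
      rw [Finset.card_singleton, hcardS] at this
      omega
    have hminy := hmin {y} hySsub ⟨y, Finset.mem_singleton_self y⟩ hyneS
    have hNyne : (nbhd G {y}).Nonempty := by
      rw [← Finset.card_pos]
      rw [Finset.card_singleton] at hminy
      omega
    obtain ⟨w, hw⟩ := hNyne
    obtain ⟨hwS, a, haa, hadj⟩ := hnotS {y} hySsub w hw
    rw [Finset.mem_singleton] at haa
    subst haa
    have hwNT : w ∈ nbhd G T := by
      rw [hNTS]
      exact hsubN {a} hySsub hw
    have hwXm : w ∉ X m := fun hxm => hwS (hXmS w hxm)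
    have hRwm : R w < m := hRw w hwNT hwXm
    obtain ⟨θ, hθr, hyθ, hwθ⟩ := hedge a w hadj
    have hθRw : θ ≤ R w := (hR w).2.2 θ hθr hwθ
    have hLa : Nat.find (hexX a) ≤ θ := Nat.find_min' (hexX a) hyθ
    have hXθ : X θ = B := hblock θ hLa (by omega)
    rw [hXθ] at hwθ
    exact hwS (hBS hwθ)
end
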